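/- arXiv:0804.1990 — 12 statements merged into one kernel-verified Lean document; each statement's English description precedes it below -/
import Mathlib

section
/- Let g = [[a,b],[conj b, conj a]] be an element of SU(1,1), let p > 1 be real, and let f be a bounded continuous complex-valued function on the open unit disc D = {z ∈ ℂ : |z| < 1}. Then ∫_D f((b + conj(a)·z)/(a + conj(b)·z)) · |a + conj(b)·z|^(−2p) · (1 − |z|²)^(p−2) dλ(z) = ∫_D f(z) · (1 − |z|²)^(p−2) dλ(z), where λ is Lebesgue measure on ℂ ≅ ℝ². (This expresses the invariance of the weighted Bergman inner product under the holomorphic representation T⁺_p of SU(1,1).) -/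
/-!
The Möbius map `M = M_g` is holomorphic with `M'(z) = (a + conj b * z)⁻²`, and it is a
bijection of the unit disc whose inverse is the Möbius map of
`g⁻¹ = [[conj a, -b], [-conj b, a]]`.
The identity `|a + conj b z|² - |b + conj a z|² = (|a|² - |b|²)(1 - |z|²)` gives
`1 - |M z|² = (1 - |z|²) / |a + conj b z|²`. Substituting `w = M z` in the right-hand integral,
the real Jacobian `|M'(z)|² = |a + conj b z|⁻⁴` and the weight `(1 - |M z|²)^(p-2)` combine to
`|a + conj b z|^(-2p) (1 - |z|²)^(p-2)`.
-/

open ComplexConjugate Complex Set Metric MeasureTheory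

lemma det_restrictScalars_toSpanSingleton (c : ℂ) :
    ((ContinuousLinearMap.toSpanSingleton ℂ c).restrictScalars ℝ).det = normSq c := by
  simp [ContinuousLinearMap.det, LinearMap.det_restrictScalars, Algebra.norm_complex_eq]

theorem integral_image_eq_integral_normSq_deriv_smul {E : Type*} [NormedAddCommGroup E]
    [NormedSpace ℝ E] {s : Set ℂ} {f f' : ℂ → ℂ} (hs : MeasurableSet s)
    (hf' : ∀ z ∈ s, HasDerivWithinAt f (f' z) s z) (hf : InjOn f s) (g : ℂ → E) :
    ∫ z in f '' s, g z = ∫ z in s, normSq (f' z) • g (f z) := by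
  simpa only [det_restrictScalars_toSpanSingleton, abs_of_nonneg (normSq_nonneg _)] using
    integral_image_eq_integral_abs_det_fderiv_smul volume hs
      (fun z hz => ((hf' z hz).hasFDerivWithinAt).restrictScalars ℝ) hf g

lemma inv_sq_sq_mul_div_sq_rpow {r t : ℝ} (hr : 0 < r) (ht : 0 ≤ t) (p : ℝ) :
    ((r ^ 2) ^ 2)⁻¹ * (t / r ^ 2) ^ (p - 2) = r ^ (-(2 * p)) * t ^ (p - 2) := by
  have h4 : ((r ^ 2) ^ 2)⁻¹ = r ^ (-4 : ℝ) := by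
    rw [← pow_mul, Real.rpow_neg hr.le]; norm_cast
  have h2 : (r ^ 2) ^ (p - 2) = r ^ (2 * (p - 2)) := by
    rw [← Real.rpow_natCast_mul hr.le]; norm_cast
  rw [Real.div_rpow ht (by positivity), h4, h2, div_eq_mul_inv, ← Real.rpow_neg hr.le,
    mul_left_comm, ← Real.rpow_add hr]
  ring_nf

namespace SU11

noncomputable def mobius (a b z : ℂ) : ℂ := (b + conj a * z) / (a + conj b * z)

lemma normSq_denom_sub_normSq_numer (a b z : ℂ) :
    normSq (a + conj b * z) - normSq (b + conj a * z)
      = (normSq a - normSq b) * (1 - normSq z) := by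
  simp only [normSq_apply, add_re, add_im, mul_re, mul_im, conj_re, conj_im]
  ring

variable {a b : ℂ}

lemma mul_conj_sub_mul_conj (hab : ‖a‖ ^ 2 - ‖b‖ ^ 2 = 1) :
    a * conj a - b * conj b = 1 := by
  rw [mul_conj, mul_conj, normSq_eq_norm_sq, normSq_eq_norm_sq]
  exact_mod_cast hab

lemma one_sub_norm_sq_le_norm_sq_denom (hab : ‖a‖ ^ 2 - ‖b‖ ^ 2 = 1) (z : ℂ) :
    1 - ‖z‖ ^ 2 ≤ ‖a + conj b * z‖ ^ 2 := by
  have := normSq_denom_sub_normSq_numer a b z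
  simp only [normSq_eq_norm_sq, hab, one_mul] at this
  nlinarith [sq_nonneg ‖b + conj a * z‖]

lemma denom_ne_zero (hab : ‖a‖ ^ 2 - ‖b‖ ^ 2 = 1) {z : ℂ} (hz : ‖z‖ < 1) :
    a + conj b * z ≠ 0 := by
  have := one_sub_norm_sq_le_norm_sq_denom hab z
  rw [← norm_pos_iff]
  nlinarith [norm_nonneg z, norm_nonneg (a + conj b * z)]

lemma one_sub_norm_sq_mobius (hab : ‖a‖ ^ 2 - ‖b‖ ^ 2 = 1) {z : ℂ}
    (hz : a + conj b * z ≠ 0) :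
    1 - ‖mobius a b z‖ ^ 2 = (1 - ‖z‖ ^ 2) / ‖a + conj b * z‖ ^ 2 := by
  have key := normSq_denom_sub_normSq_numer a b z
  simp only [normSq_eq_norm_sq, hab, one_mul] at key
  have : ‖a + conj b * z‖ ≠ 0 := norm_ne_zero_iff.2 hz
  rw [mobius, norm_div, div_pow, eq_div_iff (by positivity), sub_mul,
    div_mul_cancel₀ _ (by positivity)]
  linarith

lemma mapsTo_mobius (hab : ‖a‖ ^ 2 - ‖b‖ ^ 2 = 1) :
    MapsTo (mobius a b) (ball 0 1) (ball 0 1) := by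
  intro z hz
  rw [mem_ball_zero_iff] at hz ⊢
  have hd := denom_ne_zero hab hz
  have : 0 < 1 - ‖mobius a b z‖ ^ 2 := by
    rw [one_sub_norm_sq_mobius hab hd]
    exact div_pos (by nlinarith [norm_nonneg z]) (by positivity)
  nlinarith [norm_nonneg (mobius a b z)]

lemma norm_conj_sub_norm_neg (hab : ‖a‖ ^ 2 - ‖b‖ ^ 2 = 1) :
    ‖conj a‖ ^ 2 - ‖-b‖ ^ 2 = 1 := by
  rwa [norm_conj, norm_neg]

lemma mobius_mobius_conj_neg (hab : ‖a‖ ^ 2 - ‖b‖ ^ 2 = 1) {z : ℂ} (hz : ‖z‖ < 1) :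
    mobius a b (mobius (conj a) (-b) z) = z := by
  have hd : conj a - conj b * z ≠ 0 := by
    simpa [sub_eq_add_neg] using denom_ne_zero (norm_conj_sub_norm_neg hab) hz
  have hdet := mul_conj_sub_mul_conj hab
  simp only [mobius, conj_conj, map_neg, neg_mul, ← sub_eq_add_neg]
  have hnum : b + conj a * ((-b + a * z) / (conj a - conj b * z))
      = z / (conj a - conj b * z) := by
    rw [eq_div_iff hd, add_mul, mul_assoc, div_mul_cancel₀ _ hd]
    linear_combination z * hdet
  have hden : a + conj b * ((-b + a * z) / (conj a - conj b * z))
      = 1 / (conj a - conj b * z) := by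
    rw [eq_div_iff hd, add_mul, mul_assoc, div_mul_cancel₀ _ hd]
    linear_combination hdet
  rw [hnum, hden, div_div_div_cancel_right₀ hd, div_one]

lemma bijOn_mobius (hab : ‖a‖ ^ 2 - ‖b‖ ^ 2 = 1) :
    BijOn (mobius a b) (ball 0 1) (ball 0 1) := by
  have hab' := norm_conj_sub_norm_neg hab
  refine InvOn.bijOn ⟨fun z hz => ?_, fun z hz => ?_⟩ (mapsTo_mobius hab) (mapsTo_mobius hab')
  · simpa using mobius_mobius_conj_neg hab' (mem_ball_zero_iff.1 hz)
  · exact mobius_mobius_conj_neg hab (mem_ball_zero_iff.1 hz)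

lemma hasDerivAt_mobius (hab : ‖a‖ ^ 2 - ‖b‖ ^ 2 = 1) {z : ℂ}
    (hz : a + conj b * z ≠ 0) :
    HasDerivAt (mobius a b) ((a + conj b * z) ^ 2)⁻¹ z := by
  have hnum : HasDerivAt (fun z : ℂ => b + conj a * z) (conj a) z := by
    simpa using ((hasDerivAt_id z).const_mul (conj a)).const_add b
  have hden : HasDerivAt (fun z : ℂ => a + conj b * z) (conj b) z := by
    simpa using ((hasDerivAt_id z).const_mul (conj b)).const_add a
  refine (hnum.div hden hz).congr_deriv ?_
  field_simp
  linear_combination mul_conj_sub_mul_conj hab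

end SU11

theorem stmt_0_general (a b : ℂ) (hab : ‖a‖ ^ 2 - ‖b‖ ^ 2 = 1)
    (p : ℝ) (f : ℂ → ℂ) :
    (∫ z in Metric.ball (0 : ℂ) 1,
        f ((b + conj a * z) / (a + conj b * z)) *
          ((‖a + conj b * z‖ ^ (-(2 * p)) : ℝ) : ℂ) *
          (((1 - ‖z‖ ^ 2) ^ (p - 2) : ℝ) : ℂ))
    = ∫ z in Metric.ball (0 : ℂ) 1,
        f z * (((1 - ‖z‖ ^ 2) ^ (p - 2) : ℝ) : ℂ) := by
  set F : ℂ → ℂ := fun w => f w * (((1 - ‖w‖ ^ 2) ^ (p - 2) : ℝ) : ℂ)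
  have hM := SU11.bijOn_mobius hab
  have hden : ∀ z ∈ ball (0 : ℂ) 1, a + conj b * z ≠ 0 :=
    fun z hz => SU11.denom_ne_zero hab (mem_ball_zero_iff.1 hz)
  have hweight : ∀ z ∈ ball (0 : ℂ) 1,
      f (SU11.mobius a b z) * ((‖a + conj b * z‖ ^ (-(2 * p)) : ℝ) : ℂ) *
          (((1 - ‖z‖ ^ 2) ^ (p - 2) : ℝ) : ℂ)
        = normSq ((a + conj b * z) ^ 2)⁻¹ • F (SU11.mobius a b z) := by
    intro z hz
    have ht : 0 ≤ 1 - ‖z‖ ^ 2 := by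
      nlinarith [mem_ball_zero_iff.1 hz, norm_nonneg z]
    dsimp only [F]
    rw [Complex.real_smul, map_inv₀, map_pow, normSq_eq_norm_sq,
      SU11.one_sub_norm_sq_mobius hab (hden z hz),
      mul_assoc, ← ofReal_mul, ← inv_sq_sq_mul_div_sq_rpow (norm_pos_iff.2 (hden z hz)) ht p,
      ofReal_mul]
    ring
  calc _ = ∫ z in ball (0 : ℂ) 1,
          normSq ((a + conj b * z) ^ 2)⁻¹ • F (SU11.mobius a b z) :=
        setIntegral_congr_fun measurableSet_ball hweight
    _ = ∫ z in SU11.mobius a b '' ball 0 1, F z :=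
        (integral_image_eq_integral_normSq_deriv_smul measurableSet_ball
          (fun z hz => (SU11.hasDerivAt_mobius hab (hden z hz)).hasDerivWithinAt) hM.injOn F).symm
    _ = _ := by rw [hM.image_eq]

/-- Invariance of the weighted Bergman inner product under the holomorphic
representation `T⁺_p` of `SU(1,1)`: for `g = [[a,b],[conj b, conj a]] ∈ SU(1,1)`,
real `p > 1`, and a bounded continuous `f : ℂ → ℂ`,
`∫_D f(M_g(z)) |a + conj(b)z|^{−2p} (1−|z|²)^{p−2} dλ(z) = ∫_D f(z)(1−|z|²)^{p−2} dλ(z)`,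
where `D` is the open unit disc and `λ` Lebesgue measure on `ℂ`. -/
theorem stmt_0 (a b : ℂ) (hab : ‖a‖ ^ 2 - ‖b‖ ^ 2 = 1)
    (p : ℝ) (hp : 1 < p) (f : ℂ → ℂ) (hf : Continuous f)
    (hbd : ∃ C : ℝ, ∀ z : ℂ, ‖f z‖ ≤ C) :
    (∫ z in Metric.ball (0 : ℂ) 1,
        f ((b + conj a * z) / (a + conj b * z)) *
          ((‖a + conj b * z‖ ^ (-(2 * p)) : ℝ) : ℂ) *
          (((1 - ‖z‖ ^ 2) ^ (p - 2) : ℝ) : ℂ))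
    = ∫ z in Metric.ball (0 : ℂ) 1,
        f z * (((1 - ‖z‖ ^ 2) ^ (p - 2) : ℝ) : ℂ) :=
  stmt_0_general a b hab p f
end

section
/- Let g₁ = [[a₁,b₁],[conj b₁, conj a₁]] and g₂ = [[a₂,b₂],[conj b₂, conj a₂]] be elements of SU(1,1), and let a₃ = a₁·a₂ + b₁·conj(b₂) be the top-left entry of the matrix product g₁·g₂. Then a₁ ≠ 0, a₂ ≠ 0, and |a₃/(a₁·a₂) − 1| < 1. (This makes the Berezin–Guichardet cocycle c(g₁,g₂) = log(a₃/(a₁a₂)) well defined.) -/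
open ComplexConjugate

/-! A unimodular pair `‖a‖² - ‖b‖² = 1` has `‖b‖ < ‖a‖`, so `a ≠ 0`. Since
`a₃/(a₁a₂) - 1 = b₁ conj b₂ / (a₁a₂)`, its norm is `(‖b₁‖/‖a₁‖)(‖b₂‖/‖a₂‖) < 1`. -/

lemma norm_lt_norm_of_sq_sub_sq_eq_one {E : Type*} [SeminormedAddGroup E] {a b : E}
    (h : ‖a‖ ^ 2 - ‖b‖ ^ 2 = 1) : ‖b‖ < ‖a‖ :=
  lt_of_pow_lt_pow_left₀ 2 (norm_nonneg a) (by linarith)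

lemma ne_zero_of_norm_sq_sub_sq_eq_one {E : Type*} [NormedAddGroup E] {a b : E}
    (h : ‖a‖ ^ 2 - ‖b‖ ^ 2 = 1) : a ≠ 0 :=
  norm_pos_iff.mp ((norm_nonneg b).trans_lt (norm_lt_norm_of_sq_sub_sq_eq_one h))

lemma norm_mul_conj_div_mul_lt_one {a₁ b₁ a₂ b₂ : ℂ} (h₁ : ‖b₁‖ < ‖a₁‖) (h₂ : ‖b₂‖ < ‖a₂‖) :
    ‖b₁ * conj b₂ / (a₁ * a₂)‖ < 1 := by
  have ha₁ : 0 < ‖a₁‖ := (norm_nonneg b₁).trans_lt h₁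
  have ha₂ : 0 < ‖a₂‖ := (norm_nonneg b₂).trans_lt h₂
  rw [norm_div, norm_mul, norm_mul, Complex.norm_conj, div_lt_one (mul_pos ha₁ ha₂)]
  exact mul_lt_mul' h₁.le h₂ (norm_nonneg b₂) ha₁

/-- For `g₁, g₂ ∈ SU(1,1)` with top-left entries `a₁, a₂`, the top-left entry
`a₃ = a₁a₂ + b₁·conj b₂` of `g₁g₂` satisfies `a₁ ≠ 0`, `a₂ ≠ 0` and
`|a₃/(a₁a₂) − 1| < 1`, so the Berezin–Guichardet cocycle `log(a₃/(a₁a₂))` is well defined. -/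
theorem stmt_1 (a₁ b₁ a₂ b₂ : ℂ)
    (h₁ : ‖a₁‖ ^ 2 - ‖b₁‖ ^ 2 = 1)
    (h₂ : ‖a₂‖ ^ 2 - ‖b₂‖ ^ 2 = 1) :
    a₁ ≠ 0 ∧ a₂ ≠ 0 ∧
      ‖(a₁ * a₂ + b₁ * conj b₂) / (a₁ * a₂) - 1‖ < 1 := by
  have ha₁ := ne_zero_of_norm_sq_sub_sq_eq_one h₁
  have ha₂ := ne_zero_of_norm_sq_sub_sq_eq_one h₂
  refine ⟨ha₁, ha₂, ?_⟩
  rw [add_div, div_self (mul_ne_zero ha₁ ha₂), add_sub_cancel_left]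
  exact norm_mul_conj_div_mul_lt_one (norm_lt_norm_of_sq_sub_sq_eq_one h₁)
    (norm_lt_norm_of_sq_sub_sq_eq_one h₂)
end

section
/- Let g = [[a,b],[conj b, conj a]] be an element of SU(1,1) and let f : ℂ → ℂ be continuous. Then ∫_0^{2π} f((b + conj(a)·e^{iφ})/(a + conj(b)·e^{iφ})) · |a + conj(b)·e^{iφ}|^{−2} dφ = ∫_0^{2π} f(e^{iφ}) dφ. In other words, the Möbius transformation M_g of the unit circle has Jacobian |a + conj(b)·z|^{−2} with respect to the rotation-invariant measure on the circle. -/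
/-!
On the unit circle `b + conj a · z = z · conj (a + conj b · z)`, so `M_g(e^{iφ}) = e^{iθ(φ)}` with
`θ(φ) = φ - 2 arg a - 2 arg ((a + conj b e^{iφ}) / a)`. Since `|b| < |a|`, the quotient stays in the
right half-plane, so `θ` is smooth, `θ(φ + 2π) = θ(φ) + 2π`, and a direct computation gives
`θ' = (|a|² - |b|²) / |a + conj b e^{iφ}|²`. The identity is then the substitution `t = θ(φ)`
followed by the `2π`-periodicity of `t ↦ f(e^{it})`.
-/

open ComplexConjugate Complex Function Set

theorem Function.Periodic.intervalIntegral_deriv_smul_comp {E : Type*} [NormedAddCommGroup E]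
    [NormedSpace ℝ E] {g : ℝ → E} {θ θ' : ℝ → ℝ} {T t : ℝ} (hg : Periodic g T)
    (hgc : Continuous g) (hθ : ∀ x ∈ uIcc t (t + T), HasDerivAt θ (θ' x) x)
    (hθ' : ContinuousOn θ' (uIcc t (t + T))) (hθT : θ (t + T) = θ t + T) :
    ∫ x in t..t + T, θ' x • g (θ x) = ∫ x in (0 : ℝ)..T, g x := by
  rw [← zero_add T, ← hg.intervalIntegral_add_eq (θ t), zero_add, ← hθT]
  exact intervalIntegral.integral_deriv_smul_comp hθ hθ' hgc

namespace Complex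

theorem exp_neg_two_arg_mul_I {w : ℂ} (hw : w ≠ 0) : exp (-2 * arg w * I) = conj w / w := by
  have hnorm : (‖w‖ : ℂ) ≠ 0 := by exact_mod_cast norm_ne_zero_iff.mpr hw
  have hpolar : exp (arg w * I) = w / ‖w‖ := by
    rw [eq_div_iff hnorm, mul_comm, norm_mul_exp_arg_mul_I]
  rw [show -2 * (arg w : ℂ) * I = -(arg w * I + arg w * I) by ring, exp_neg, exp_add, hpolar]
  field_simp
  exact (mul_conj' w).symm

theorem add_conj_mul_ne_zero {a b z : ℂ} (hab : ‖b‖ < ‖a‖) (hz : ‖z‖ ≤ 1) :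
    a + conj b * z ≠ 0 := by
  intro h
  have : ‖a‖ ≤ ‖b‖ := by
    rw [eq_neg_of_add_eq_zero_left h, norm_neg, norm_mul, norm_conj]
    exact mul_le_of_le_one_right (norm_nonneg b) hz
  linarith

theorem add_conj_mul_eq_mul_conj {a b z : ℂ} (hz : ‖z‖ = 1) :
    b + conj a * z = z * conj (a + conj b * z) := by
  have hzz : z * conj z = 1 := by rw [mul_conj, normSq_eq_norm_sq, hz]; norm_num
  rw [map_add, map_mul, conj_conj]
  linear_combination (-b) * hzz

theorem periodic_exp_ofReal_mul_I : Periodic (fun t : ℝ => exp (t * I)) (2 * Real.pi) := by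
  simpa [circleMap] using periodic_circleMap 0 1

theorem one_sub_two_im_mul_I_div {a w : ℂ} (hD : a + w ≠ 0) :
    1 - 2 * (w * I / (a + w)).im = (‖a‖ ^ 2 - ‖w‖ ^ 2) / ‖a + w‖ ^ 2 := by
  have hD' : normSq (a + w) ≠ 0 := normSq_eq_zero.not.mpr hD
  rw [mul_div_right_comm, mul_I_im, div_re, ← add_div]
  simp only [Complex.sq_norm]
  field_simp
  simp only [normSq_apply, add_re, add_im]
  ring

end Complex

noncomputable def mobiusCircleLift (a b : ℂ) (φ : ℝ) : ℝ :=
  φ - 2 * arg a - 2 * arg ((a + conj b * exp (φ * I)) / a)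

section mobiusCircleLift

variable {a b : ℂ}

theorem exp_mobiusCircleLift_mul_I (hab : ‖b‖ < ‖a‖) (φ : ℝ) :
    exp (mobiusCircleLift a b φ * I) =
      (b + conj a * exp (φ * I)) / (a + conj b * exp (φ * I)) := by
  have ha : a ≠ 0 := norm_pos_iff.mp ((norm_nonneg b).trans_lt hab)
  have hD := add_conj_mul_ne_zero hab (norm_exp_ofReal_mul_I φ).le
  have hsplit : (mobiusCircleLift a b φ : ℂ) * I = φ * I + -2 * arg a * I
      + -2 * arg ((a + conj b * exp (φ * I)) / a) * I := by
    push_cast [mobiusCircleLift]; ring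
  rw [hsplit, exp_add, exp_add, exp_neg_two_arg_mul_I ha,
    exp_neg_two_arg_mul_I (div_ne_zero hD ha),
    add_conj_mul_eq_mul_conj (a := a) (b := b) (norm_exp_ofReal_mul_I φ), map_div₀]
  generalize a + conj b * exp (φ * I) = D at hD ⊢
  have ha' : conj a ≠ 0 := (map_ne_zero _).mpr ha
  field_simp

theorem hasDerivAt_mobiusCircleLift (hab : ‖b‖ < ‖a‖) (φ : ℝ) :
    HasDerivAt (mobiusCircleLift a b)
      ((‖a‖ ^ 2 - ‖b‖ ^ 2) / ‖a + conj b * exp (φ * I)‖ ^ 2) φ := by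
  have ha : a ≠ 0 := norm_pos_iff.mp ((norm_nonneg b).trans_lt hab)
  have hz : ‖exp (φ * I)‖ = 1 := norm_exp_ofReal_mul_I φ
  have hD := add_conj_mul_ne_zero hab hz.le
  have hu : HasDerivAt (fun t : ℝ => (a + conj b * exp (t * I)) / a)
      (conj b * (exp (φ * I) * I) / a) φ := by
    simpa using ((((hasDerivAt_id φ).ofReal_comp.mul_const I).cexp.const_mul (conj b)).const_add
      a).div_const a
  have hslit : (a + conj b * exp (φ * I)) / a ∈ slitPlane := by
    rw [add_div, div_self ha, mul_div_right_comm]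
    apply mem_slitPlane_of_norm_lt_one
    rw [norm_mul, norm_div, norm_conj, hz, mul_one, div_lt_one (norm_pos_iff.mpr ha)]
    exact hab
  have harg : HasDerivAt (fun t : ℝ => arg ((a + conj b * exp (t * I)) / a))
      (conj b * exp (φ * I) * I / (a + conj b * exp (φ * I))).im φ := by
    have := imCLM.hasFDerivAt.comp_hasDerivAt φ (hu.clog_real hslit)
    simp only [Function.comp_def, imCLM_apply, log_im] at this
    refine this.congr_deriv (congrArg im ?_)
    field_simp
  refine (((hasDerivAt_id φ).sub_const (2 * arg a)).sub (harg.const_mul 2)).congr_deriv ?_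
  rw [one_sub_two_im_mul_I_div hD, norm_mul, norm_conj, hz, mul_one]

theorem mobiusCircleLift_add_two_pi (φ : ℝ) :
    mobiusCircleLift a b (φ + 2 * Real.pi) = mobiusCircleLift a b φ + 2 * Real.pi := by
  simp only [mobiusCircleLift, periodic_exp_ofReal_mul_I φ]
  ring

end mobiusCircleLift

/-- For `g = [[a,b],[conj b, conj a]] ∈ SU(1,1)` and any continuous `f : ℂ → ℂ`,
`∫_0^{2π} f(M_g(e^{iφ})) |a + conj(b) e^{iφ}|^{−2} dφ = ∫_0^{2π} f(e^{iφ}) dφ`: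
the Möbius transformation of the circle has Jacobian `|a + conj(b)z|^{−2}`. -/
theorem stmt_2 (a b : ℂ) (hab : ‖a‖ ^ 2 - ‖b‖ ^ 2 = 1)
    (f : ℂ → ℂ) (hf : Continuous f) :
    (∫ φ in (0 : ℝ)..(2 * Real.pi),
        f ((b + conj a * Complex.exp (φ * Complex.I)) /
            (a + conj b * Complex.exp (φ * Complex.I))) *
          ((‖a + conj b * Complex.exp (φ * Complex.I)‖ ^ 2)⁻¹ : ℝ))
    = ∫ φ in (0 : ℝ)..(2 * Real.pi), f (Complex.exp (φ * Complex.I)) := by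
  have hba : ‖b‖ < ‖a‖ := lt_of_pow_lt_pow_left₀ 2 (norm_nonneg a) (by linarith)
  have hJacobian : Continuous fun φ : ℝ => (‖a‖ ^ 2 - ‖b‖ ^ 2) / ‖a + conj b * exp (φ * I)‖ ^ 2 :=
    continuous_const.div (by fun_prop) fun φ =>
      pow_ne_zero 2 (norm_ne_zero_iff.mpr (add_conj_mul_ne_zero hba (norm_exp_ofReal_mul_I φ).le))
  have hsubst := (periodic_exp_ofReal_mul_I.comp f).intervalIntegral_deriv_smul_comp
    (hf.comp (by fun_prop)) (fun φ _ => hasDerivAt_mobiusCircleLift hba φ) hJacobian.continuousOn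
    (mobiusCircleLift_add_two_pi 0)
  rw [zero_add] at hsubst
  refine .trans (intervalIntegral.integral_congr fun φ _ => ?_) hsubst
  rw [Function.comp_apply, exp_mobiusCircleLift_mul_I hba, hab, one_div, real_smul, mul_comm]
end

section
/- Let p, q ∈ ℂ be non-integers with Re(p+q) > 1, and let n be a nonnegative integer. Then the series ∑_{k=0}^∞ [Γ(1−p+n+k) · Γ(1−q+k)] / [Γ(1−p) · Γ(1−q) · Γ(n+k+1) · Γ(k+1)] converges, and its sum equals (−1)^n · Γ(p+q−1) / (Γ(p−n) · Γ(q+n)). (Equivalently, in Pochhammer notation, ∑_{k≥0} (1−p)_{n+k} (1−q)_k / ((n+k)!·k!) = (−1)^n Γ(p+q−1)/(Γ(p−n)Γ(q+n)); this is the formula for the Fourier coefficients of the distribution (1−z·conj u)^{p−1}(1−conj(z)·u)^{q−1} on the torus.) -/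
/-!
With `a = 1 - p + n`, `b = 1 - q`, `c = n + 1`, the `k`-th term is `(1-p)ₙ/n!` times the
coefficient `(a)ₖ(b)ₖ/((c)ₖ k!)` of `₂F₁(a, b; c; ·)`, and `c - a = p`, `c - b = q + n`,
`c - a - b = p + q - 1`. So the theorem is Gauss's summation
`₂F₁(a, b; c; 1) = Γ(c)Γ(c-a-b)/(Γ(c-a)Γ(c-b))` combined with `(1-p)ₙ = (-1)ⁿ(p-n)ₙ`
and `Γ(p) = (p-n)ₙ Γ(p-n)`.

Gauss's summation follows from the contiguous relation
`c(c-a-b) F(c) = (c-a)(c-b) F(c+1)` (where `F(c) = ₂F₁(a, b; c; 1)`), which is a telescoping sum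
of the termwise identity. Iterating it gives `F(c) = (c-a)ₘ(c-b)ₘ/((c)ₘ(c-a-b)ₘ) · F(c+m)`;
as `m → ∞` the Pochhammer quotient tends to the Gamma quotient by Euler's limit formula
`(s)ₘ₊₁ ~ mˢ m!/Γ(s)`, and `F(c+m) → 1` because every term past the first is `O(1/m)`.
Euler's formula also bounds the `k`-th coefficient by `O(k^(Re(a+b-c)-1))`, which gives
convergence.
-/

open Filter Finset Complex Topology Asymptotics
open scoped Nat

theorem ascPochhammer_eval_eq_prod_range {R : Type*} [CommSemiring R] (r : R) (n : ℕ) :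
    (ascPochhammer R n).eval r = ∏ j ∈ range n, (r + j) := by
  induction n with
  | zero => simp
  | succ n ih => rw [ascPochhammer_succ_eval, ih, prod_range_succ]

theorem ascPochhammer_succ_eval_left {R : Type*} [CommSemiring R] (r : R) (n : ℕ) :
    (ascPochhammer R (n + 1)).eval r = r * (ascPochhammer R n).eval (r + 1) := by
  simp [ascPochhammer_succ_left, Polynomial.eval_comp]

theorem ascPochhammer_eval_add {R : Type*} [CommSemiring R] (r : R) (m n : ℕ) :
    (ascPochhammer R (m + n)).eval r =
      (ascPochhammer R m).eval r * (ascPochhammer R n).eval (r + m) := by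
  simp [← ascPochhammer_mul, Polynomial.eval_comp]

theorem ascPochhammer_eval_one_sub {R : Type*} [CommRing R] (r : R) (n : ℕ) :
    (ascPochhammer R n).eval (1 - r) = (-1) ^ n * (ascPochhammer R n).eval (r - n) := by
  rw [show 1 - r = -(r - 1) by ring, ascPochhammer_eval_neg_eq_descPochhammer,
    descPochhammer_eval_eq_ascPochhammer, sub_sub, add_comm 1, ← sub_sub, sub_add_cancel]

theorem Complex.ne_neg_natCast_of_re_pos {z : ℂ} (hz : 0 < z.re) (k : ℕ) : z ≠ -k := by
  rintro rfl
  simp only [neg_re, natCast_re] at hz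
  linarith [(Nat.cast_nonneg k : (0 : ℝ) ≤ k)]

theorem Complex.re_add_natCast_pos {z : ℂ} (hz : 0 < z.re) (m : ℕ) : 0 < (z + m).re := by
  simp only [add_re, natCast_re]
  positivity

theorem Complex.ascPochhammer_eval_ne_zero_of_re_pos {c : ℂ} (hc : 0 < c.re) (k : ℕ) :
    (ascPochhammer ℂ k).eval c ≠ 0 := by
  rw [Ne, ascPochhammer_eval_eq_zero_iff]
  rintro ⟨j, -, hj⟩
  exact ne_neg_natCast_of_re_pos hc j (by rw [hj, neg_neg])

theorem Complex.add_intCast_ne_neg_natCast {p : ℂ} (hp : ∀ m : ℤ, p ≠ m) (j : ℤ)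
    (k : ℕ) : p + j ≠ -k :=
  fun h => hp (-k - j) (by push_cast; linear_combination h)

theorem Complex.intCast_sub_ne_neg_natCast {p : ℂ} (hp : ∀ m : ℤ, p ≠ m) (j : ℤ)
    (k : ℕ) : j - p ≠ -k :=
  fun h => hp (j + k) (by push_cast; linear_combination -h)

theorem Complex.Gamma_add_nat_eq_mul {z : ℂ} (hz : ∀ k : ℕ, z ≠ -k) (n : ℕ) :
    Gamma (z + n) = (ascPochhammer ℂ n).eval z * Gamma z := by
  rw [← Gamma_add_nat_div_Gamma_eq z hz, div_mul_cancel₀ _ (Gamma_ne_zero hz)]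

theorem Complex.norm_ascPochhammer_eval_ofReal_le {y : ℝ} {z : ℂ} (hy : 0 ≤ y)
    (hyz : y ≤ z.re) (k : ℕ) :
    ‖(ascPochhammer ℂ k).eval (y : ℂ)‖ ≤ ‖(ascPochhammer ℂ k).eval z‖ := by
  simp only [ascPochhammer_eval_eq_prod_range, norm_prod]
  refine prod_le_prod (fun _ _ => norm_nonneg _) fun j _ => ?_
  calc ‖(y : ℂ) + j‖ = y + j := by
        rw [← ofReal_natCast, ← ofReal_add, norm_real, Real.norm_of_nonneg (by positivity)]
    _ ≤ (z + j).re := by simpa using hyz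
    _ ≤ ‖z + j‖ := re_le_norm _

theorem Complex.inv_GammaSeq (s : ℂ) (n : ℕ) :
    (GammaSeq s n)⁻¹ = (ascPochhammer ℂ (n + 1)).eval s / (n ^ s * n !) := by
  rw [GammaSeq, inv_div, ascPochhammer_eval_eq_prod_range]

/-- Also at the poles `s = -m`: there the Pochhammer symbols vanish for `n ≥ m`, and `Gamma s`
takes the junk value `0`. -/
theorem Complex.tendsto_ascPochhammer_div_cpow_mul_factorial (s : ℂ) :
    Tendsto (fun n : ℕ => (ascPochhammer ℂ (n + 1)).eval s / (n ^ s * n !)) atTop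
      (𝓝 (Gamma s)⁻¹) := by
  by_cases hs : Gamma s = 0
  · obtain ⟨m, rfl⟩ := (Gamma_eq_zero_iff s).1 hs
    rw [hs, inv_zero]
    refine tendsto_const_nhds.congr' ?_
    filter_upwards [eventually_ge_atTop m] with n hn
    rw [(ascPochhammer_eval_eq_zero_iff _ _).2 ⟨m, by omega, by simp⟩, zero_div]
  · simpa only [inv_GammaSeq] using (GammaSeq_tendsto_Gamma s).inv₀ hs

theorem Complex.natCast_cpow_mul_factorial_ne_zero (s : ℂ) {n : ℕ} (hn : n ≠ 0) :
    (n : ℂ) ^ s * n ! ≠ 0 :=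
  mul_ne_zero (cpow_ne_zero_iff.2 (Or.inl (Nat.cast_ne_zero.2 hn)))
    (Nat.cast_ne_zero.2 n.factorial_ne_zero)

theorem Complex.natCast_cpow_mul_factorial_isTheta (s : ℂ) :
    (fun n : ℕ => (n : ℂ) ^ s * n !) =Θ[atTop] fun n => (n : ℝ) ^ s.re * n ! := by
  refine IsTheta.of_norm_eventuallyEq ?_
  filter_upwards [eventually_ge_atTop 1] with n hn
  simp [norm_natCast_cpow_of_pos (by omega : 0 < n)]

theorem Complex.ascPochhammer_succ_isBigO (s : ℂ) :
    (fun n : ℕ => (ascPochhammer ℂ (n + 1)).eval s) =O[atTop]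
      fun n => (n : ℝ) ^ s.re * n ! := by
  have h := ((tendsto_ascPochhammer_div_cpow_mul_factorial s).isBigO_one ℝ).mul
    (natCast_cpow_mul_factorial_isTheta s).isBigO
  refine (h.congr' ?_ (by simp)).trans (isBigO_refl _ _)
  filter_upwards [eventually_ge_atTop 1] with n hn
  have := natCast_cpow_mul_factorial_ne_zero s (by omega : n ≠ 0)
  exact div_mul_cancel₀ _ this

theorem Complex.inv_ascPochhammer_succ_isBigO (s : ℂ) :
    (fun n : ℕ => ((ascPochhammer ℂ (n + 1)).eval s)⁻¹) =O[atTop]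
      fun n => ((n : ℝ) ^ s.re * n !)⁻¹ := by
  have h := ((GammaSeq_tendsto_Gamma s).isBigO_one ℝ).mul
    (natCast_cpow_mul_factorial_isTheta s).inv.isBigO
  refine (h.congr' ?_ (by simp)).trans (isBigO_refl _ _)
  filter_upwards [eventually_ge_atTop 1] with n hn
  have := natCast_cpow_mul_factorial_ne_zero s (by omega : n ≠ 0)
  rw [← inv_inv (GammaSeq s n), inv_GammaSeq, ← mul_inv, div_mul_cancel₀ _ this]

theorem Complex.tendsto_ascPochhammer_ratio {u v w z : ℂ} (huv : u + v = w + z)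
    (hw : Gamma w ≠ 0) (hz : Gamma z ≠ 0) :
    Tendsto (fun m : ℕ => (ascPochhammer ℂ m).eval u * (ascPochhammer ℂ m).eval v /
        ((ascPochhammer ℂ m).eval w * (ascPochhammer ℂ m).eval z)) atTop
      (𝓝 (Gamma w * Gamma z / (Gamma u * Gamma v))) := by
  have h := ((tendsto_ascPochhammer_div_cpow_mul_factorial u).mul
    (tendsto_ascPochhammer_div_cpow_mul_factorial v)).div
    ((tendsto_ascPochhammer_div_cpow_mul_factorial w).mul
      (tendsto_ascPochhammer_div_cpow_mul_factorial z)) (by simp [hw, hz])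
  rw [show (Gamma u)⁻¹ * (Gamma v)⁻¹ / ((Gamma w)⁻¹ * (Gamma z)⁻¹) =
    Gamma w * Gamma z / (Gamma u * Gamma v) by simp only [div_eq_mul_inv, mul_inv, inv_inv]; ring]
    at h
  refine (tendsto_add_atTop_iff_nat 1).1 (h.congr' ?_)
  filter_upwards [eventually_ge_atTop 1] with m hm
  have hm0 : (m : ℂ) ≠ 0 := Nat.cast_ne_zero.2 (by omega)
  have hnorm : ((m : ℂ) ^ u * m !) * ((m : ℂ) ^ v * m !) =
      ((m : ℂ) ^ w * m !) * ((m : ℂ) ^ z * m !) := by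
    rw [mul_mul_mul_comm, ← cpow_add _ _ hm0, huv, cpow_add _ _ hm0, mul_mul_mul_comm]
  simp only [Pi.div_apply]
  rw [div_mul_div_comm, div_mul_div_comm, div_div_div_comm, hnorm,
    div_self (mul_ne_zero (natCast_cpow_mul_factorial_ne_zero w (by omega))
      (natCast_cpow_mul_factorial_ne_zero z (by omega))), div_one]

theorem ordinaryHypergeometricCoefficient_succ_isBigO (a b c : ℂ) :
    (fun k : ℕ => ordinaryHypergeometricCoefficient a b c (k + 1)) =O[atTop]
      fun k => (k : ℝ) ^ ((a + b - c).re - 1) := by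
  have hfac :
      (fun k : ℕ => ((k + 1)! : ℂ)⁻¹) =O[atTop] fun k => (((k + 1)! : ℕ) : ℝ)⁻¹ :=
    (IsTheta.of_norm_eventuallyEq (Eventually.of_forall fun k => by simp)).isBigO
  refine (((hfac.mul (ascPochhammer_succ_isBigO a)).mul (ascPochhammer_succ_isBigO b)).mul
    (inv_ascPochhammer_succ_isBigO c)).trans (IsBigO.of_bound 1 ?_)
  filter_upwards [eventually_ge_atTop 1] with k hk
  have hk0 : (0 : ℝ) < k := by exact_mod_cast hk
  have hf : (0 : ℝ) < k ! := by exact_mod_cast k.factorial_pos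
  rw [Real.norm_of_nonneg (by positivity), Real.norm_of_nonneg (by positivity), one_mul,
    Nat.factorial_succ, Nat.cast_mul, sub_re, add_re, Real.rpow_sub_one hk0.ne',
    Real.rpow_sub hk0, Real.rpow_add hk0]
  push_cast
  field_simp
  linarith

theorem summable_norm_ordinaryHypergeometricCoefficient {a b c : ℂ} (h : 0 < (c - a - b).re) :
    Summable fun k => ‖ordinaryHypergeometricCoefficient a b c k‖ := by
  refine (summable_nat_add_iff 1).1 (summable_of_isBigO_nat (Real.summable_nat_rpow.2 ?_)
    (ordinaryHypergeometricCoefficient_succ_isBigO a b c).norm_left)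
  simp only [sub_re, add_re] at h ⊢
  linarith

theorem summable_ordinaryHypergeometricCoefficient {a b c : ℂ} (h : 0 < (c - a - b).re) :
    Summable (ordinaryHypergeometricCoefficient a b c) :=
  (summable_norm_ordinaryHypergeometricCoefficient h).of_norm

theorem tendsto_natCast_mul_ordinaryHypergeometricCoefficient {a b c : ℂ}
    (h : 0 < (c - a - b).re) :
    Tendsto (fun k : ℕ => (k : ℂ) * ordinaryHypergeometricCoefficient a b c k) atTop
      (𝓝 0) := by
  refine (tendsto_add_atTop_iff_nat 1).1 ?_
  have hlin : (fun k : ℕ => ((k + 1 : ℕ) : ℂ)) =O[atTop] fun k => (k : ℝ) := by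
    refine IsBigO.of_bound 2 ?_
    filter_upwards [eventually_ge_atTop 1] with k hk
    have : (1 : ℝ) ≤ k := by exact_mod_cast hk
    simp only [Nat.cast_add, Nat.cast_one]
    rw [Real.norm_of_nonneg (by positivity)]
    norm_cast
    linarith
  refine ((hlin.mul (ordinaryHypergeometricCoefficient_succ_isBigO a b c)).trans ?_).trans_tendsto
    ((tendsto_rpow_neg_atTop (y := (c - a - b).re) h).comp tendsto_natCast_atTop_atTop)
  refine IsBigO.of_bound 1 ?_
  filter_upwards [eventually_ge_atTop 1] with k hk
  have hk0 : (0 : ℝ) < k := by exact_mod_cast hk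
  have hre : (a + b - c).re = -(c - a - b).re := by simp only [sub_re, add_re]; ring
  rw [Function.comp_apply, one_mul, hre, Real.rpow_sub_one hk0.ne', mul_div_cancel₀ _ hk0.ne']

theorem norm_ordinaryHypergeometricCoefficient_add_nat_le (a b : ℂ) {c : ℂ} (hc : 0 < c.re)
    (m k : ℕ) :
    ‖ordinaryHypergeometricCoefficient a b (c + m) (k + 1)‖ ≤
      c.re / (c.re + m) * ‖ordinaryHypergeometricCoefficient a b (c.re : ℂ) (k + 1)‖ := by
  set x := c.re
  have hv : 0 < ‖(ascPochhammer ℂ (k + 1)).eval (x : ℂ)‖ :=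
    norm_pos_iff.2 (ascPochhammer_eval_ne_zero_of_re_pos (by simpa using hc) _)
  have hu : (x + m) * ‖(ascPochhammer ℂ (k + 1)).eval (x : ℂ)‖ ≤
      x * ‖(ascPochhammer ℂ (k + 1)).eval (c + m)‖ := by
    simp only [ascPochhammer_succ_eval_left, norm_mul, norm_real,
      Real.norm_of_nonneg hc.le]
    have h1 : x + m ≤ ‖c + m‖ := by simpa using re_le_norm (c + m)
    have h2 := norm_ascPochhammer_eval_ofReal_le (y := x + 1) (z := c + m + 1) (by positivity)
      (by simp [x]) k
    push_cast at h2
    calc (x + m) * (x * ‖(ascPochhammer ℂ k).eval ((x : ℂ) + 1)‖)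
        = x * ((x + m) * ‖(ascPochhammer ℂ k).eval ((x : ℂ) + 1)‖) := by ring
      _ ≤ x * (‖c + m‖ * ‖(ascPochhammer ℂ k).eval (c + m + 1)‖) := by gcongr
  have hinv : ‖(ascPochhammer ℂ (k + 1)).eval (c + m)‖⁻¹ ≤
      x / (x + m) * ‖(ascPochhammer ℂ (k + 1)).eval (x : ℂ)‖⁻¹ := by
    rw [show x / (x + m) * ‖(ascPochhammer ℂ (k + 1)).eval (x : ℂ)‖⁻¹ =
      ((x + m) * ‖(ascPochhammer ℂ (k + 1)).eval (x : ℂ)‖ / x)⁻¹ by field_simp]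
    exact inv_anti₀ (by positivity) (by rwa [div_le_iff₀' hc])
  simp only [ordinaryHypergeometricCoefficient, norm_mul, norm_inv]
  calc _ ≤ _ * _ := mul_le_mul_of_nonneg_left hinv (by positivity)
    _ = _ := by ring

theorem ordinaryHypergeometricCoefficient_contiguous (a b : ℂ) {c : ℂ} {k : ℕ}
    (hck : (ascPochhammer ℂ (k + 1)).eval c ≠ 0) :
    c * (c - a - b) * ordinaryHypergeometricCoefficient a b c k
        - (c - a) * (c - b) * ordinaryHypergeometricCoefficient a b (c + 1) k
      = c * k * ordinaryHypergeometricCoefficient a b c k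
        - c * (k + 1 : ℕ) * ordinaryHypergeometricCoefficient a b c (k + 1) := by
  have hc : c ≠ 0 := left_ne_zero_of_mul (ascPochhammer_succ_eval_left c k ▸ hck)
  have hck' := ascPochhammer_succ_eval k c ▸ hck
  have hpk : (ascPochhammer ℂ k).eval c ≠ 0 := left_ne_zero_of_mul hck'
  have hck'' : c + k ≠ 0 := right_ne_zero_of_mul hck'
  have hshift :
      (ascPochhammer ℂ k).eval (c + 1) = (ascPochhammer ℂ k).eval c * (c + k) / c := by
    rw [eq_div_iff hc, ← ascPochhammer_succ_eval, ascPochhammer_succ_eval_left, mul_comm]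
  simp only [ordinaryHypergeometricCoefficient, ascPochhammer_succ_eval _ a,
    ascPochhammer_succ_eval _ b, ascPochhammer_succ_eval _ c, hshift, Nat.factorial_succ]
  push_cast
  field_simp
  ring

theorem tsum_sub_succ_eq_of_tendsto {G : Type*} [AddCommGroup G] [TopologicalSpace G]
    [IsTopologicalAddGroup G] [T2Space G] {x : ℕ → G} {l : G}
    (hx : Tendsto x atTop (𝓝 l)) (hs : Summable fun k => x k - x (k + 1)) :
    ∑' k, (x k - x (k + 1)) = x 0 - l := by
  refine tendsto_nhds_unique hs.hasSum.tendsto_sum_nat ?_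
  simpa only [sum_range_sub'] using tendsto_const_nhds.sub hx

theorem tsum_ordinaryHypergeometricCoefficient_contiguous {a b c : ℂ} (hc : 0 < c.re)
    (h : 0 < (c - a - b).re) :
    c * (c - a - b) * ∑' k, ordinaryHypergeometricCoefficient a b c k =
      (c - a) * (c - b) * ∑' k, ordinaryHypergeometricCoefficient a b (c + 1) k := by
  have h1 : 0 < (c + 1 - a - b).re := by simp only [sub_re, add_re, one_re] at h ⊢; linarith
  set x : ℕ → ℂ := fun k => c * k * ordinaryHypergeometricCoefficient a b c k
  have hx : Tendsto x atTop (𝓝 0) := by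
    simpa [x, mul_assoc] using
      (tendsto_natCast_mul_ordinaryHypergeometricCoefficient h).const_mul c
  have hdiff := ((summable_ordinaryHypergeometricCoefficient h).hasSum.mul_left
    (c * (c - a - b))).sub ((summable_ordinaryHypergeometricCoefficient h1).hasSum.mul_left
      ((c - a) * (c - b)))
  simp_rw [ordinaryHypergeometricCoefficient_contiguous a b
    (ascPochhammer_eval_ne_zero_of_re_pos hc _)] at hdiff
  rw [← sub_eq_zero, ← hdiff.tsum_eq]
  simpa [x] using tsum_sub_succ_eq_of_tendsto hx hdiff.summable

theorem ascPochhammer_mul_tsum_ordinaryHypergeometricCoefficient {a b c : ℂ} (hc : 0 < c.re)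
    (h : 0 < (c - a - b).re) (m : ℕ) :
    (ascPochhammer ℂ m).eval c * (ascPochhammer ℂ m).eval (c - a - b) *
        ∑' k, ordinaryHypergeometricCoefficient a b c k =
      (ascPochhammer ℂ m).eval (c - a) * (ascPochhammer ℂ m).eval (c - b) *
        ∑' k, ordinaryHypergeometricCoefficient a b (c + m) k := by
  induction m with
  | zero => simp
  | succ m ih =>
    have hm : 0 < (c + m - a - b).re := by
      rw [show c + m - a - b = c - a - b + m by ring]; exact re_add_natCast_pos h m
    have hrec := tsum_ordinaryHypergeometricCoefficient_contiguous (re_add_natCast_pos hc m) hm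
    simp only [ascPochhammer_succ_eval, Nat.cast_succ, ← add_assoc]
    linear_combination (c + m) * (c - a - b + m) * ih +
      (ascPochhammer ℂ m).eval (c - a) * (ascPochhammer ℂ m).eval (c - b) * hrec

theorem tendsto_tsum_ordinaryHypergeometricCoefficient_add_nat {a b c : ℂ} (hc : 0 < c.re)
    (h : 0 < (c - a - b).re) :
    Tendsto (fun m : ℕ => ∑' k, ordinaryHypergeometricCoefficient a b (c + m) k) atTop
      (𝓝 1) := by
  set T := ∑' k, ‖ordinaryHypergeometricCoefficient a b (c.re : ℂ) (k + 1)‖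
  have hT : Summable fun k => ‖ordinaryHypergeometricCoefficient a b (c.re : ℂ) (k + 1)‖ :=
    (summable_nat_add_iff 1).2 (summable_norm_ordinaryHypergeometricCoefficient (by simpa using h))
  have htail : ∀ m : ℕ, ‖∑' k, ordinaryHypergeometricCoefficient a b (c + m) k - 1‖ ≤
      c.re / (c.re + m) * T := by
    intro m
    have hcm : 0 < (c + m - a - b).re := by
      rw [show c + m - a - b = c - a - b + m by ring]; exact re_add_natCast_pos h m
    rw [(summable_ordinaryHypergeometricCoefficient hcm).tsum_eq_zero_add]
    simp only [ordinaryHypergeometricCoefficient, ascPochhammer_zero, Polynomial.eval_one,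
      Nat.factorial_zero, Nat.cast_one, inv_one, mul_one, add_sub_cancel_left]
    exact tsum_of_norm_bounded (hT.hasSum.mul_left _)
      (norm_ordinaryHypergeometricCoefficient_add_nat_le a b hc m)
  have hlim : Tendsto (fun m : ℕ => c.re / (c.re + m) * T) atTop (𝓝 0) := by
    simpa using ((tendsto_const_nhds (x := c.re)).div_atTop
      (tendsto_atTop_add_const_left _ _ tendsto_natCast_atTop_atTop)).mul_const T
  exact tendsto_sub_nhds_zero_iff.1 (squeeze_zero_norm htail hlim)

theorem hasSum_ordinaryHypergeometricCoefficient {a b c : ℂ} (hc : 0 < c.re)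
    (h : 0 < (c - a - b).re) :
    HasSum (ordinaryHypergeometricCoefficient a b c)
      (Gamma c * Gamma (c - a - b) / (Gamma (c - a) * Gamma (c - b))) := by
  have hlim := (tendsto_ascPochhammer_ratio (u := c - a) (v := c - b) (by ring)
    (Gamma_ne_zero_of_re_pos hc) (Gamma_ne_zero_of_re_pos h)).mul
    (tendsto_tsum_ordinaryHypergeometricCoefficient_add_nat hc h)
  rw [mul_one] at hlim
  have hiter : ∀ m : ℕ,
      (ascPochhammer ℂ m).eval (c - a) * (ascPochhammer ℂ m).eval (c - b) /
      ((ascPochhammer ℂ m).eval c * (ascPochhammer ℂ m).eval (c - a - b)) *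
      ∑' k, ordinaryHypergeometricCoefficient a b (c + m) k =
        ∑' k, ordinaryHypergeometricCoefficient a b c k := fun m => by
    rw [div_mul_eq_mul_div, div_eq_iff (mul_ne_zero (ascPochhammer_eval_ne_zero_of_re_pos hc m)
      (ascPochhammer_eval_ne_zero_of_re_pos h m)),
      ← ascPochhammer_mul_tsum_ordinaryHypergeometricCoefficient hc h m]
    ring
  rw [tendsto_nhds_unique (hlim.congr hiter) tendsto_const_nhds]
  exact (summable_ordinaryHypergeometricCoefficient h).hasSum

theorem Complex.ascPochhammer_eval_one_sub_div_Gamma {p : ℂ} (hp : ∀ k : ℕ, p ≠ -k)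
    {n : ℕ} (hpn : ∀ k : ℕ, p - n ≠ -k) :
    (ascPochhammer ℂ n).eval (1 - p) / Gamma p = (-1) ^ n / Gamma (p - n) := by
  have hΓp := Gamma_add_nat_eq_mul hpn n
  rw [sub_add_cancel] at hΓp
  have hpoch : (ascPochhammer ℂ n).eval (p - n) ≠ 0 :=
    left_ne_zero_of_mul (hΓp ▸ Gamma_ne_zero hp)
  rw [hΓp, ascPochhammer_eval_one_sub]
  field_simp

theorem Complex.Gamma_div_eq_mul_ordinaryHypergeometricCoefficient {p q : ℂ}
    (hp : ∀ k : ℕ, 1 - p ≠ -k) (hq : ∀ k : ℕ, 1 - q ≠ -k) (n k : ℕ) :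
    Gamma (1 - p + n + k) * Gamma (1 - q + k) /
        (Gamma (1 - p) * Gamma (1 - q) * Gamma ((n : ℂ) + k + 1) * Gamma ((k : ℂ) + 1)) =
      (ascPochhammer ℂ n).eval (1 - p) / n ! *
        ordinaryHypergeometricCoefficient (1 - p + n) (1 - q) ((n : ℂ) + 1) k := by
  have hn1 : 0 < ((n : ℂ) + 1).re := by simp only [add_re, natCast_re, one_re]; positivity
  have hn1k := ascPochhammer_eval_ne_zero_of_re_pos hn1 k
  rw [show 1 - p + n + k = (1 - p) + (n + k : ℕ) by push_cast; ring, Gamma_add_nat_eq_mul hp,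
    ascPochhammer_eval_add, Gamma_add_nat_eq_mul hq, show (n : ℂ) + k + 1 = (n + 1) + k by ring,
    Gamma_add_nat_eq_mul (ne_neg_natCast_of_re_pos hn1), Gamma_nat_eq_factorial,
    Gamma_nat_eq_factorial]
  simp only [ordinaryHypergeometricCoefficient]
  field_simp [Gamma_ne_zero hp, Gamma_ne_zero hq]

/-- For non-integer `p, q ∈ ℂ` with `Re(p+q) > 1` and `n ∈ ℕ`, the series
`∑_{k≥0} Γ(1−p+n+k)Γ(1−q+k)/(Γ(1−p)Γ(1−q)(n+k)!·k!)` converges to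
`(−1)^n Γ(p+q−1)/(Γ(p−n)Γ(q+n))` — the Fourier coefficients of the distribution
`(1−z·conj u)^{p−1}(1−conj(z)·u)^{q−1}`. -/
theorem stmt_3 (p q : ℂ) (hp : ∀ m : ℤ, p ≠ m) (hq : ∀ m : ℤ, q ≠ m)
    (hpq : 1 < (p + q).re) (n : ℕ) :
    HasSum
      (fun k : ℕ =>
        Complex.Gamma (1 - p + n + k) * Complex.Gamma (1 - q + k) /
          (Complex.Gamma (1 - p) * Complex.Gamma (1 - q) *
            Complex.Gamma ((n : ℂ) + k + 1) * Complex.Gamma ((k : ℂ) + 1)))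
      ((-1 : ℂ) ^ n * Complex.Gamma (p + q - 1) /
        (Complex.Gamma (p - n) * Complex.Gamma (q + n))) := by
  have h1p : ∀ k : ℕ, 1 - p ≠ -k := by simpa using intCast_sub_ne_neg_natCast hp 1
  have h1q : ∀ k : ℕ, 1 - q ≠ -k := by simpa using intCast_sub_ne_neg_natCast hq 1
  have hp0 : ∀ k : ℕ, p ≠ -k := by simpa using add_intCast_ne_neg_natCast hp 0
  have hpn : ∀ k : ℕ, p - n ≠ -k := by
    simpa [← sub_eq_add_neg] using add_intCast_ne_neg_natCast hp (-n)
  have hgauss := (hasSum_ordinaryHypergeometricCoefficient (a := 1 - p + n) (b := 1 - q)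
    (c := n + 1) (by simp only [add_re, natCast_re, one_re]; positivity)
    (by simp only [sub_re, add_re, natCast_re, one_re] at hpq ⊢; linarith)).mul_left
    ((ascPochhammer ℂ n).eval (1 - p) / n !)
  rw [show (n : ℂ) + 1 - (1 - p + n) - (1 - q) = p + q - 1 by ring,
    show (n : ℂ) + 1 - (1 - p + n) = p by ring, show (n : ℂ) + 1 - (1 - q) = q + n by ring,
    Gamma_nat_eq_factorial] at hgauss
  have hvalue : (ascPochhammer ℂ n).eval (1 - p) / n ! *
        (n ! * Gamma (p + q - 1) / (Gamma p * Gamma (q + n))) =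
      (-1 : ℂ) ^ n * Gamma (p + q - 1) / (Gamma (p - n) * Gamma (q + n)) := by
    have hn : (n ! : ℂ) ≠ 0 := Nat.cast_ne_zero.2 n.factorial_ne_zero
    calc _ = (ascPochhammer ℂ n).eval (1 - p) / Gamma p * Gamma (p + q - 1) / Gamma (q + n) := by
          field_simp
      _ = _ := by rw [ascPochhammer_eval_one_sub_div_Gamma hp0 hpn]; ring
  exact hvalue ▸ hgauss.congr_fun (Gamma_div_eq_mul_ordinaryHypergeometricCoefficient h1p h1q n)
end

section
/- Let p, q be real numbers with 0 < p < 1 and 0 < q < 1. Then for every integer m, (−1)^m / (Γ(p+m) · Γ(q−m)) > 0, where Γ is the real Gamma function. (Equivalently, all Fourier coefficients c_m = (−1)^m Γ(p+q−1)/(Γ(p+m)Γ(q−m)) of the kernel of the complementary-series inner product for SU(1,1) have the same sign, so the inner product ⟨·,·⟩_{p|q} is positive definite.) -/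
/-!
For `0 < x < 1` the recurrence `Γ(s + 1) = s Γ(s)` shows that `Γ(x - n)` has the sign `(-1)^n`,
while `Γ(x + n) > 0`. This settles `m ≥ 0`; replacing `m` by `-m` swaps the roles of `p` and `q`.
-/

open Real

lemma Real.neg_one_pow_div_Gamma_sub_nat_pos {x : ℝ} (hx0 : 0 < x) (hx1 : x < 1) (n : ℕ) :
    0 < (-1) ^ n / Gamma (x - n) := by
  induction n with
  | zero => simpa using Gamma_pos_of_pos hx0
  | succ n ih =>
    have hn : (0 : ℝ) < n + 1 - x := by have := n.cast_nonneg (α := ℝ); linarith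
    have hrec : Gamma (x - (n + 1 : ℕ)) = Gamma (x - n) / (x - (n + 1)) := by
      rw [eq_div_iff (by linarith), mul_comm, Nat.cast_succ, ← Gamma_add_one (by linarith)]
      ring_nf
    calc (0 : ℝ) < (-1) ^ n / Gamma (x - n) * (n + 1 - x) := mul_pos ih hn
      _ = (-1) ^ (n + 1) / Gamma (x - (n + 1 : ℕ)) := by
        rw [hrec, div_div_eq_mul_div]; ring

lemma Real.neg_one_pow_div_Gamma_add_nat_mul_Gamma_sub_nat_pos {p q : ℝ} (hp : 0 < p)
    (hq0 : 0 < q) (hq1 : q < 1) (n : ℕ) :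
    0 < (-1) ^ n / (Gamma (p + n) * Gamma (q - n)) := by
  have hpn : 0 < Gamma (p + n) := Gamma_pos_of_pos (by positivity)
  calc 0 < 1 / Gamma (p + n) * ((-1) ^ n / Gamma (q - n)) :=
        mul_pos (one_div_pos.2 hpn) (neg_one_pow_div_Gamma_sub_nat_pos hq0 hq1 n)
    _ = (-1) ^ n / (Gamma (p + n) * Gamma (q - n)) := by ring

/-- For `0 < p < 1`, `0 < q < 1` and any integer `m`, the Fourier coefficient factor
`(−1)^m / (Γ(p+m)·Γ(q−m))` of the complementary-series kernel for `SU(1,1)` is positive. -/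
theorem stmt_5 (p q : ℝ) (hp0 : 0 < p) (hp1 : p < 1) (hq0 : 0 < q) (hq1 : q < 1)
    (m : ℤ) :
    0 < (-1 : ℝ) ^ m / (Real.Gamma (p + m) * Real.Gamma (q - m)) := by
  obtain ⟨n, rfl | rfl⟩ := Int.eq_nat_or_neg m
  · simpa using neg_one_pow_div_Gamma_add_nat_mul_Gamma_sub_nat_pos hp0 hq0 hq1 n
  · rw [zpow_neg, zpow_natCast, ← inv_pow, inv_neg_one, Int.cast_neg, ← sub_eq_add_neg,
      sub_neg_eq_add, mul_comm]
    simpa using neg_one_pow_div_Gamma_add_nat_mul_Gamma_sub_nat_pos hq0 hp0 hp1 n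
end

section
/- Let s, t be real numbers with s ≠ 0, t ≠ 0 and s + t ≠ 0, and let m be an integer. Then, as ε → 0 through nonzero real values, the quantity (−1)^m · Γ(ε(s+t)) / (Γ(1 + εs + m) · Γ(εt − m)) tends to t/(s+t) if m ≥ 0, and to −s/(s+t) if m < 0. (This is the blow-up limit of the Fourier coefficients c_m(p,q) = (−1)^m Γ(p+q−1)/(Γ(p+m)Γ(q−m)) of the complementary-series kernel along the line p = 1 + εs, q = εt through the point (p,q) = (1,0).) -/
/-!
At `x = -n` the Gamma function has a simple pole with residue `(-1)^n / n!`, so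
`ε Γ(εc - n) → (-1)^n / (c n!)` for `c ≠ 0`, while `Γ` is continuous at positive integers.
Multiplying numerator and denominator by `ε`, exactly one denominator factor has a pole at `ε = 0`:
`Γ(εt - m)` if `m ≥ 0`, and `Γ(1 + εs + m)` if `m < 0`. The limit is then a ratio of residues.
-/

open Filter Topology

namespace Real

open Nat

theorem continuousAt_Gamma_of_pos {x : ℝ} (hx : 0 < x) : ContinuousAt Gamma x :=
  (differentiableOn_Gamma_Ioi.differentiableAt (Ioi_mem_nhds hx)).continuousAt

theorem tendsto_Gamma_mul_add {a : ℝ} (ha : 0 < a) (c : ℝ) :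
    Tendsto (fun ε => Gamma (ε * c + a)) (𝓝 0) (𝓝 (Gamma a)) :=
  (continuousAt_Gamma_of_pos ha).tendsto.comp <|
    (by fun_prop : Continuous fun ε : ℝ => ε * c + a).tendsto' 0 a (by simp)

theorem tendsto_self_mul_Gamma_nhdsNE_zero : Tendsto (fun x => x * Gamma x) (𝓝[≠] 0) (𝓝 1) := by
  have hshift : Tendsto (fun x => Gamma (x * 1 + 1)) (𝓝[≠] 0) (𝓝 1) := by
    simpa [Gamma_one] using (tendsto_Gamma_mul_add one_pos 1).mono_left nhdsWithin_le_nhds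
  refine hshift.congr' ?_
  filter_upwards [self_mem_nhdsWithin] with x hx using by rw [mul_one, Gamma_add_one hx]

theorem tendsto_self_mul_Gamma_sub_nat (n : ℕ) :
    Tendsto (fun x => x * Gamma (x - n)) (𝓝[≠] 0) (𝓝 ((-1) ^ n / n !)) := by
  induction n with
  | zero => simpa using tendsto_self_mul_Gamma_nhdsNE_zero
  | succ n ih =>
    have hlin : Tendsto (fun x : ℝ => x - (n + 1)) (𝓝[≠] 0) (𝓝 (-(n + 1))) :=
      ((continuous_sub_right _).tendsto' 0 _ (zero_sub _)).mono_left nhdsWithin_le_nhds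
    have hne : (-((n : ℝ) + 1)) ≠ 0 := neg_ne_zero.mpr (by positivity)
    have hrec : ∀ᶠ x in 𝓝[≠] (0 : ℝ),
        x * Gamma (x - n) / (x - (n + 1)) = x * Gamma (x - ↑(n + 1)) := by
      filter_upwards [hlin.eventually_ne hne] with x hx
      rw [show x - n = x - (n + 1) + 1 by ring, Gamma_add_one hx]
      push_cast
      field_simp
    convert (ih.div hlin hne).congr' hrec using 2
    push_cast [factorial_succ, pow_succ]
    field_simp

theorem tendsto_mul_Gamma_mul_sub_nat {c : ℝ} (hc : c ≠ 0) (n : ℕ) :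
    Tendsto (fun ε => ε * Gamma (ε * c - n)) (𝓝[≠] 0) (𝓝 ((-1) ^ n / (c * n !))) := by
  have hscale : Tendsto (fun ε : ℝ => ε * c) (𝓝[≠] 0) (𝓝[≠] 0) := by
    refine tendsto_nhdsWithin_of_tendsto_nhds_of_eventually_within _ ?_ ?_
    · exact ((continuous_mul_const c).tendsto' 0 0 (zero_mul c)).mono_left nhdsWithin_le_nhds
    · filter_upwards [self_mem_nhdsWithin] with ε hε using mul_ne_zero hε hc
  convert ((tendsto_self_mul_Gamma_sub_nat n).comp hscale).div_const c using 1
  · ext ε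
    simp only [Function.comp]
    field_simp
  · field_simp

end Real

open Real Nat

theorem tendsto_mul_Gamma_one_add_nat_mul_Gamma_sub_nat (s : ℝ) {t : ℝ} (ht : t ≠ 0) (k : ℕ) :
    Tendsto (fun ε => ε * (Gamma (1 + ε * s + k) * Gamma (ε * t - k))) (𝓝[≠] 0)
      (𝓝 ((-1) ^ k / t)) := by
  have hA : Tendsto (fun ε => Gamma (ε * s + (k + 1))) (𝓝[≠] 0) (𝓝 k !) := by
    simpa [Gamma_nat_eq_factorial] using
      (tendsto_Gamma_mul_add (by positivity : (0 : ℝ) < k + 1) s).mono_left nhdsWithin_le_nhds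
  convert hA.mul (tendsto_mul_Gamma_mul_sub_nat ht k) using 1
  · ext ε
    ring_nf
  · field_simp

theorem tendsto_mul_Gamma_sub_nat_mul_Gamma_add_nat {s : ℝ} (hs : s ≠ 0) (t : ℝ) (n : ℕ) :
    Tendsto (fun ε => ε * (Gamma (ε * s - n) * Gamma (ε * t + (n + 1)))) (𝓝[≠] 0)
      (𝓝 ((-1) ^ n / s)) := by
  have hB : Tendsto (fun ε => Gamma (ε * t + (n + 1))) (𝓝[≠] 0) (𝓝 n !) := by
    simpa [Gamma_nat_eq_factorial] using
      (tendsto_Gamma_mul_add (by positivity : (0 : ℝ) < n + 1) t).mono_left nhdsWithin_le_nhds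
  convert (tendsto_mul_Gamma_mul_sub_nat hs n).mul hB using 1
  · ext ε
    ring
  · field_simp

/-- Blow-up limit of the Fourier coefficients of the complementary-series kernel
along the line `p = 1 + εs`, `q = εt` through `(p,q) = (1,0)`: as `ε → 0` through
nonzero reals, `(−1)^m·Γ(ε(s+t))/(Γ(1+εs+m)·Γ(εt−m))` tends to `t/(s+t)` for `m ≥ 0`
and to `−s/(s+t)` for `m < 0`. -/
theorem stmt_6 (s t : ℝ) (hs : s ≠ 0) (ht : t ≠ 0) (hst : s + t ≠ 0) (m : ℤ) :
    Tendsto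
      (fun ε : ℝ =>
        (-1 : ℝ) ^ m * Real.Gamma (ε * (s + t)) /
          (Real.Gamma (1 + ε * s + m) * Real.Gamma (ε * t - m)))
      (𝓝[≠] (0 : ℝ))
      (𝓝 (if 0 ≤ m then t / (s + t) else -s / (s + t))) := by
  have hnum : Tendsto (fun ε => ε * Gamma (ε * (s + t))) (𝓝[≠] 0) (𝓝 (1 / (s + t))) := by
    simpa using tendsto_mul_Gamma_mul_sub_nat hst 0
  suffices Tendsto (fun ε => (-1 : ℝ) ^ m * (ε * Gamma (ε * (s + t))) /
      (ε * (Gamma (1 + ε * s + m) * Gamma (ε * t - m)))) (𝓝[≠] 0)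
      (𝓝 (if 0 ≤ m then t / (s + t) else -s / (s + t))) by
    refine this.congr' ?_
    filter_upwards [self_mem_nhdsWithin] with ε hε
    rw [mul_left_comm, mul_div_mul_left _ _ hε]
  cases m with
  | ofNat k =>
    simp only [Int.ofNat_eq_natCast, zpow_natCast, Int.cast_natCast, Int.natCast_nonneg, if_true]
    convert (hnum.const_mul ((-1 : ℝ) ^ k)).div
      (tendsto_mul_Gamma_one_add_nat_mul_Gamma_sub_nat s ht k) (by positivity) using 1
    · rfl
    · congr 1
      field_simp
  | negSucc n =>
    simp only [zpow_negSucc, Int.cast_negSucc, if_neg (Int.negSucc_lt_zero n).not_ge]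
    convert (hnum.const_mul ((-1 : ℝ) ^ (n + 1))⁻¹).div
      (tendsto_mul_Gamma_sub_nat_mul_Gamma_add_nat hs t n) (by positivity) using 1
    · funext ε
      simp only [Pi.div_apply]
      congr 4 <;> push_cast <;> ring
    · congr 1
      rw [pow_succ]
      field_simp
      rw [← pow_mul, pow_mul', neg_one_sq, one_pow]
end

section
/- Let n ≥ 1, let g = [[a,b],[c,d]] be an element of U(n,n), and let u, v be unitary n×n complex matrices. Then 1 − u^{[g]}·(v^{[g]})ᴴ = (a+u·c)⁻¹ · (1 − u·vᴴ) · ((a+v·c)ᴴ)⁻¹, where 1 denotes the n×n identity matrix and Mᴴ the conjugate transpose of M. (This is the transformation law of the kernel det(1−z·uᴴ) under the action of U(n,n), from which the invariance of the Stein–Sahi Hermitian forms follows.) -/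
open Matrix

/-- The block matrix `J = [[1,0],[0,−1]]` defining the group `U(n,n)`. -/
def Jmat (n : ℕ) : Matrix (Fin n ⊕ Fin n) (Fin n ⊕ Fin n) ℂ :=
  Matrix.fromBlocks 1 0 0 (-1)

open scoped ComplexOrder in
lemma aux_isUnit {n : ℕ} {a c u : Matrix (Fin n) (Fin n) ℂ}
    (h : aᴴ * a - cᴴ * c = 1) (hu : u ∈ Matrix.unitaryGroup (Fin n) ℂ) :
    IsUnit (a + u * c) := by
  rw [Matrix.isUnit_iff_isUnit_det, isUnit_iff_ne_zero]
  intro hdet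
  obtain ⟨x, hx, hx0⟩ := Matrix.exists_mulVec_eq_zero_iff.2 hdet
  apply hx
  have key : ∀ (M : Matrix (Fin n) (Fin n) ℂ) (y : Fin n → ℂ),
      star y ⬝ᵥ (Mᴴ * M) *ᵥ y = star (M *ᵥ y) ⬝ᵥ (M *ᵥ y) := fun M y => by
    rw [Matrix.star_mulVec, ← Matrix.mulVec_mulVec, Matrix.dotProduct_mulVec]
  have huu : uᴴ * u = 1 := by
    have := hu.1
    rwa [Matrix.star_eq_conjTranspose] at this
  have h1 : a *ᵥ x = -(u *ᵥ (c *ᵥ x)) := by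
    rw [Matrix.mulVec_mulVec]
    rw [Matrix.add_mulVec] at hx0
    exact eq_neg_of_add_eq_zero_left hx0
  have h2 : star (a *ᵥ x) ⬝ᵥ (a *ᵥ x) = star (c *ᵥ x) ⬝ᵥ (c *ᵥ x) := by
    have hk := key u (c *ᵥ x)
    rw [huu, Matrix.one_mulVec] at hk
    rw [h1, star_neg, neg_dotProduct, dotProduct_neg, neg_neg, ← hk]
  have h3 : star x ⬝ᵥ x = 0 := by
    have hh := congrArg (fun M : Matrix (Fin n) (Fin n) ℂ => star x ⬝ᵥ M *ᵥ x) h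
    simp only [Matrix.sub_mulVec, dotProduct_sub, Matrix.one_mulVec] at hh
    rw [key a x, key c x, h2, sub_self] at hh
    exact hh.symm
  exact dotProduct_star_self_eq_zero.mp h3

/-- Transformation law of the kernel `det(1 − z·uᴴ)` under the action of `U(n,n)`:
for `g = [[a,b],[c,d]] ∈ U(n,n)` and unitary `u, v`,
`1 − u^{[g]}(v^{[g]})ᴴ = (a+uc)⁻¹ (1 − uvᴴ) ((a+vc)ᴴ)⁻¹`. -/
theorem stmt_9 (n : ℕ) (hn : 1 ≤ n)
    (a b c d : Matrix (Fin n) (Fin n) ℂ)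
    (hg : Matrix.fromBlocks a b c d * Jmat n * (Matrix.fromBlocks a b c d)ᴴ = Jmat n)
    (u v : Matrix (Fin n) (Fin n) ℂ)
    (hu : u ∈ Matrix.unitaryGroup (Fin n) ℂ) (hv : v ∈ Matrix.unitaryGroup (Fin n) ℂ) :
    1 - ((a + u * c)⁻¹ * (b + u * d)) * ((a + v * c)⁻¹ * (b + v * d))ᴴ
      = (a + u * c)⁻¹ * (1 - u * vᴴ) * ((a + v * c)ᴴ)⁻¹ := by
  set G := Matrix.fromBlocks a b c d with hG
  have hJ2 : Jmat n * Jmat n = 1 := by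
    rw [Jmat, Matrix.fromBlocks_multiply, ← Matrix.fromBlocks_one]
    congr 1 <;> simp
  -- `g` is invertible and `gᴴ J g = J`
  have h1 : G * (Jmat n * Gᴴ * Jmat n) = 1 := by
    rw [← Matrix.mul_assoc, ← Matrix.mul_assoc, hg, hJ2]
  have h2 : (Jmat n * Gᴴ * Jmat n) * G = 1 := mul_eq_one_comm.mp h1
  have hg2 : Gᴴ * Jmat n * G = Jmat n := by
    have hh : Jmat n * ((Jmat n * Gᴴ * Jmat n) * G) = Jmat n * 1 := by rw [h2]
    rw [Matrix.mul_one] at hh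
    simp only [← Matrix.mul_assoc] at hh
    rwa [hJ2, Matrix.one_mul] at hh
  -- block relations
  have hgE := hg
  rw [hG, Jmat, Matrix.fromBlocks_conjTranspose, Matrix.fromBlocks_multiply,
    Matrix.fromBlocks_multiply] at hgE
  simp only [Matrix.mul_one, Matrix.mul_zero, Matrix.zero_mul, Matrix.mul_neg,
    Matrix.neg_mul, add_zero, zero_add, zero_sub, neg_mul, ← sub_eq_add_neg] at hgE
  obtain ⟨e1, e2, e3, e4⟩ := Matrix.fromBlocks_inj.mp hgE
  have hg2E := hg2
  rw [hG, Jmat, Matrix.fromBlocks_conjTranspose, Matrix.fromBlocks_multiply,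
    Matrix.fromBlocks_multiply] at hg2E
  simp only [Matrix.mul_one, Matrix.mul_zero, Matrix.zero_mul, Matrix.mul_neg,
    Matrix.neg_mul, add_zero, zero_add, zero_sub, neg_mul, ← sub_eq_add_neg] at hg2E
  obtain ⟨f1, f2, f3, f4⟩ := Matrix.fromBlocks_inj.mp hg2E
  -- invertibility of a + uc and a + vc
  have hwu : IsUnit (a + u * c) := aux_isUnit f1 hu
  have hwv : IsUnit (a + v * c) := aux_isUnit f1 hv
  have hwuD : IsUnit (a + u * c).det := (Matrix.isUnit_iff_isUnit_det _).mp hwu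
  have hwvD : IsUnit ((a + v * c)ᴴ).det := by
    rw [Matrix.det_conjTranspose]
    exact ((Matrix.isUnit_iff_isUnit_det _).mp hwv).star
  -- the key kernel identity
  have key2 : (a + u * c) * (a + v * c)ᴴ - (b + u * d) * (b + v * d)ᴴ = 1 - u * vᴴ := by
    have expand : (a + u * c) * (a + v * c)ᴴ - (b + u * d) * (b + v * d)ᴴ
        = (a * aᴴ - b * bᴴ) + (a * cᴴ - b * dᴴ) * vᴴ + u * (c * aᴴ - d * bᴴ)
          + u * ((c * cᴴ - d * dᴴ) * vᴴ) := by
      simp only [Matrix.conjTranspose_add, Matrix.conjTranspose_mul]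
      noncomm_ring
    rw [expand, e1, e2, e3, e4]
    noncomm_ring
  -- conclude
  have hw1 : (a + u * c)⁻¹ * (a + u * c) = 1 := Matrix.nonsing_inv_mul _ hwuD
  have hW1 : (a + v * c)ᴴ * ((a + v * c)ᴴ)⁻¹ = 1 := Matrix.mul_nonsing_inv _ hwvD
  rw [← key2, Matrix.conjTranspose_mul, Matrix.conjTranspose_nonsing_inv]
  simp only [Matrix.sub_mul, Matrix.mul_sub, Matrix.mul_assoc, hW1, Matrix.mul_one, hw1]
end

section
/- Let n ≥ 1 and let g = [[a,b],[c,d]] be an element of U(n,n). Then the blocks a and d are invertible matrices, and moreover ‖c·a⁻¹‖ < 1 and ‖a⁻¹·b‖ < 1, where ‖·‖ denotes the operator norm of an n×n complex matrix acting on the standard Hermitian space ℂⁿ. -/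
open Matrix

/-- The operator (spectral) norm of an `n×n` complex matrix, i.e. the norm of the
induced continuous linear operator on the Hermitian space `ℂⁿ`. -/
noncomputable def opNorm {n : ℕ} (M : Matrix (Fin n) (Fin n) ℂ) : ℝ :=
  ‖Matrix.toEuclideanCLM (𝕜 := ℂ) M‖

lemma Jmat_mul_Jmat (n : ℕ) : Jmat n * Jmat n = 1 := by
  simp [Jmat, Matrix.fromBlocks_multiply, ← Matrix.fromBlocks_one]

open scoped ComplexOrder in
lemma isUnit_of_eq {n : ℕ} (a c : Matrix (Fin n) (Fin n) ℂ)
    (h : aᴴ * a = 1 + cᴴ * c) : IsUnit a := by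
  have hpd : (aᴴ * a).PosDef := by
    rw [h]
    exact Matrix.PosDef.add_posSemidef Matrix.PosDef.one
      (Matrix.posSemidef_conjTranspose_mul_self c)
  have := hpd.isUnit
  rw [Matrix.isUnit_iff_isUnit_det, Matrix.det_mul] at this
  exact (Matrix.isUnit_iff_isUnit_det a).2 (isUnit_of_mul_isUnit_right this)

lemma clm_key {E : Type*} [NormedAddCommGroup E] [InnerProductSpace ℂ E] [Nontrivial E]
    (A B C : E →L[ℂ] E) (hAB : A * B = 1)
    (h : ∀ v, ‖A v‖ ^ 2 = ‖v‖ ^ 2 + ‖C v‖ ^ 2) : ‖C * B‖ < 1 := by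
  have hA1 : (1 : ℝ) ≤ ‖A‖ := by
    obtain ⟨x, hx⟩ := exists_ne (0 : E)
    have hx' : 0 < ‖x‖ := norm_pos_iff.2 hx
    have h1 : ‖x‖ ≤ ‖A x‖ := by
      have := h x
      nlinarith [sq_nonneg ‖C x‖, norm_nonneg (A x), norm_nonneg x]
    have h2 : ‖A x‖ ≤ ‖A‖ * ‖x‖ := A.le_opNorm x
    nlinarith
  have hApos : (0 : ℝ) < ‖A‖ := lt_of_lt_of_le one_pos hA1
  obtain ⟨t, htlt, ht0, ht⟩ : ∃ t : ℝ, t < 1 ∧ 0 ≤ t ∧ t = 1 - ‖A‖⁻¹ ^ 2 := by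
    refine ⟨1 - ‖A‖⁻¹ ^ 2, ?_, ?_, rfl⟩
    · have : 0 < ‖A‖⁻¹ ^ 2 := by positivity
      linarith
    · have h1 : ‖A‖⁻¹ ≤ 1 := by
        rw [inv_le_one_iff₀]; right; exact hA1
      have h2 : (0:ℝ) ≤ ‖A‖⁻¹ := by positivity
      nlinarith
  have hM0 : 0 ≤ Real.sqrt t := Real.sqrt_nonneg t
  have key : ‖C * B‖ ≤ Real.sqrt t := by
    apply ContinuousLinearMap.opNorm_le_bound _ hM0
    intro w
    have hABw : A (B w) = w := by
      have := ContinuousLinearMap.ext_iff.1 hAB w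
      simpa using this
    have h1 : ‖w‖ ^ 2 = ‖B w‖ ^ 2 + ‖C (B w)‖ ^ 2 := by
      have := h (B w); rw [hABw] at this; exact this
    have h2 : ‖w‖ ≤ ‖A‖ * ‖B w‖ := by
      calc ‖w‖ = ‖A (B w)‖ := by rw [hABw]
        _ ≤ ‖A‖ * ‖B w‖ := A.le_opNorm _
    have h3 : (‖A‖)⁻¹ * ‖w‖ ≤ ‖B w‖ := by
      rw [inv_mul_le_iff₀ hApos] at *
      linarith [h2]
    have h4 : ‖(C * B) w‖ ^ 2 ≤ t * ‖w‖ ^ 2 := by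
      have : ‖(C * B) w‖ = ‖C (B w)‖ := rfl
      rw [this, ht]
      have h5 : ((‖A‖)⁻¹ * ‖w‖) ^ 2 ≤ ‖B w‖ ^ 2 := by
        apply sq_le_sq' _ h3
        nlinarith [norm_nonneg (B w), mul_nonneg (inv_nonneg.2 hApos.le) (norm_nonneg w)]
      nlinarith [h1]
    have h6 : Real.sqrt t * ‖w‖ = Real.sqrt (t * ‖w‖ ^ 2) := by
      rw [Real.sqrt_mul ht0, Real.sqrt_sq (norm_nonneg w)]
    calc ‖(C * B) w‖ = Real.sqrt (‖(C * B) w‖ ^ 2) := (Real.sqrt_sq (norm_nonneg _)).symm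
      _ ≤ Real.sqrt (t * ‖w‖ ^ 2) := Real.sqrt_le_sqrt h4
      _ = Real.sqrt t * ‖w‖ := h6.symm
  have : Real.sqrt t < 1 := by
    have := Real.sqrt_lt_sqrt ht0 htlt
    rwa [Real.sqrt_one] at this
  linarith

open scoped InnerProductSpace in
lemma euclidean_norm_eq {n : ℕ} (a c : Matrix (Fin n) (Fin n) ℂ)
    (h : aᴴ * a = 1 + cᴴ * c) (v : EuclideanSpace ℂ (Fin n)) :
    ‖Matrix.toEuclideanCLM (𝕜 := ℂ) a v‖ ^ 2
      = ‖v‖ ^ 2 + ‖Matrix.toEuclideanCLM (𝕜 := ℂ) c v‖ ^ 2 := by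
  set A := Matrix.toEuclideanCLM (𝕜 := ℂ) a with hA
  set C := Matrix.toEuclideanCLM (𝕜 := ℂ) c with hC
  have hφ : star A * A = 1 + star C * C := by
    have h2 := congrArg (Matrix.toEuclideanCLM (𝕜 := ℂ)) h
    rw [_root_.map_mul, _root_.map_add, _root_.map_one, _root_.map_mul] at h2
    rw [hA, hC, ← map_star, ← map_star]
    exact h2
  have key : (⟪A v, A v⟫_ℂ) = ⟪v, v⟫_ℂ + ⟪C v, C v⟫_ℂ := by
    have h1 : (star A * A) v = v + (star C * C) v := by
      rw [hφ]; simp [ContinuousLinearMap.add_apply]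
    have e1 : ⟪v, (star A * A) v⟫_ℂ = ⟪A v, A v⟫_ℂ := by
      rw [ContinuousLinearMap.star_eq_adjoint, ContinuousLinearMap.mul_apply,
        ContinuousLinearMap.adjoint_inner_right]
    have e2 : ⟪v, (star C * C) v⟫_ℂ = ⟪C v, C v⟫_ℂ := by
      rw [ContinuousLinearMap.star_eq_adjoint, ContinuousLinearMap.mul_apply,
        ContinuousLinearMap.adjoint_inner_right]
    rw [← e1, ← e2, h1, inner_add_right]
  rw [inner_self_eq_norm_sq_to_K, inner_self_eq_norm_sq_to_K,
    inner_self_eq_norm_sq_to_K] at key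
  exact_mod_cast key

lemma opnorm_lt {n : ℕ} (hn : 1 ≤ n) (a c : Matrix (Fin n) (Fin n) ℂ)
    (h : aᴴ * a = 1 + cᴴ * c) : opNorm (c * a⁻¹) < 1 := by
  have ha : IsUnit a := isUnit_of_eq a c h
  haveI : Nonempty (Fin n) := ⟨⟨0, hn⟩⟩
  haveI : Nontrivial (EuclideanSpace ℂ (Fin n)) := inferInstance
  have haa : a * a⁻¹ = 1 := Matrix.mul_nonsing_inv a ((Matrix.isUnit_iff_isUnit_det a).1 ha)
  have hAB : Matrix.toEuclideanCLM (𝕜 := ℂ) a * Matrix.toEuclideanCLM (𝕜 := ℂ) a⁻¹ = 1 := by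
    rw [← _root_.map_mul, haa, _root_.map_one]
  have hres := clm_key (Matrix.toEuclideanCLM (𝕜 := ℂ) a) (Matrix.toEuclideanCLM (𝕜 := ℂ) a⁻¹)
    (Matrix.toEuclideanCLM (𝕜 := ℂ) c) hAB (euclidean_norm_eq a c h)
  rw [opNorm, _root_.map_mul]
  exact hres

set_option synthInstance.maxHeartbeats 1000000 in
set_option maxHeartbeats 2000000 in
/-- For `g = [[a,b],[c,d]] ∈ U(n,n)` the blocks `a` and `d` are invertible, and
`‖c·a⁻¹‖ < 1`, `‖a⁻¹·b‖ < 1` in the operator norm on `ℂⁿ`. -/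
theorem stmt_11 (n : ℕ) (hn : 1 ≤ n)
    (a b c d : Matrix (Fin n) (Fin n) ℂ)
    (hg : Matrix.fromBlocks a b c d * Jmat n * (Matrix.fromBlocks a b c d)ᴴ = Jmat n) :
    IsUnit a ∧ IsUnit d ∧ opNorm (c * a⁻¹) < 1 ∧ opNorm (a⁻¹ * b) < 1 := by
  have hg2 : (Matrix.fromBlocks a b c d)ᴴ * Jmat n * (Matrix.fromBlocks a b c d) = Jmat n := by
    generalize Matrix.fromBlocks a b c d = g at hg ⊢
    have h1 : g * (Jmat n * gᴴ * Jmat n) = 1 := by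
      calc g * (Jmat n * gᴴ * Jmat n) = (g * Jmat n * gᴴ) * Jmat n := by
            simp only [mul_assoc]
        _ = Jmat n * Jmat n := by rw [hg]
        _ = 1 := Jmat_mul_Jmat n
    have h2 : Jmat n * gᴴ * Jmat n * g = 1 := mul_eq_one_comm.mp h1
    calc gᴴ * Jmat n * g = (Jmat n * Jmat n) * (gᴴ * Jmat n * g) := by
          rw [Jmat_mul_Jmat, one_mul]
      _ = Jmat n * (Jmat n * gᴴ * Jmat n * g) := by simp only [mul_assoc]
      _ = Jmat n := by rw [h2, mul_one]
  rw [Jmat] at hg2 hg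
  simp only [Matrix.fromBlocks_conjTranspose, Matrix.fromBlocks_multiply, Matrix.mul_one,
    Matrix.mul_zero, Matrix.zero_mul, Matrix.mul_neg, Matrix.neg_mul, Matrix.mul_one,
    add_zero, zero_add, mul_one, mul_zero, mul_neg, neg_mul] at hg2 hg
  obtain ⟨e11, e12, e21, e22⟩ := Matrix.fromBlocks_inj.mp hg2
  obtain ⟨f11, f12, f21, f22⟩ := Matrix.fromBlocks_inj.mp hg
  have ha_eq : aᴴ * a = 1 + cᴴ * c := by rw [← e11]; abel
  have hd_eq : dᴴ * d = 1 + bᴴ * b := by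
    rw [← sub_eq_add_neg, sub_eq_iff_eq_add] at e22
    rw [e22]; abel
  have haH : a * aᴴ = 1 + b * bᴴ := by rw [← f11]; abel
  refine ⟨isUnit_of_eq a c ha_eq, isUnit_of_eq d b hd_eq, opnorm_lt hn a c ha_eq, ?_⟩
  have h4 : opNorm (bᴴ * aᴴ⁻¹) < 1 := by
    apply opnorm_lt hn aᴴ bᴴ
    rw [Matrix.conjTranspose_conjTranspose, Matrix.conjTranspose_conjTranspose]
    exact haH
  have heq : opNorm (a⁻¹ * b) = opNorm (bᴴ * aᴴ⁻¹) := by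
    rw [opNorm, opNorm]
    have hmt : bᴴ * aᴴ⁻¹ = (a⁻¹ * b)ᴴ := by
      rw [Matrix.conjTranspose_mul, Matrix.conjTranspose_nonsing_inv]
    rw [hmt, show ((a⁻¹ * b)ᴴ) = star (a⁻¹ * b) from rfl, map_star,
      ContinuousLinearMap.star_eq_adjoint]
    exact (ContinuousLinearMap.adjoint.norm_map _).symm
  rw [heq]; exact h4
end

section
/- Let (X, μ) be a σ-finite measure space, n ≥ 1, and let f, u₁,…,uₙ, v₁,…,vₙ : X → ℂ be measurable functions such that x ↦ f(x)·u_l(x)·v_m(x) is integrable for all 1 ≤ l, m ≤ n, and such that the function (x₁,…,xₙ) ↦ ∏_{k=1}^n f(x_k) · det_{k,l}[u_l(x_k)] · det_{k,l}[v_l(x_k)] is integrable on Xⁿ with respect to the product measure. Then ∫_{Xⁿ} ∏_{k=1}^n f(x_k) · det_{k,l}[u_l(x_k)] · det_{k,l}[v_l(x_k)] dμⁿ = n! · det_{l,m}[ ∫_X f(x)·u_l(x)·v_m(x) dμ(x) ]. (Andréief-type determinant integration lemma.) -/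
/-!
Expanding both determinants by the Leibniz formula writes the integrand as a signed double sum
over permutations `σ, τ` of products `∏ k, f (x k) * u (σ k) (x k) * v (τ k) (x k)`, each of which
factorises under the product measure into `∏ k, M (σ k) (τ k)` with `M l m = ∫ f * u l * v m`.
For fixed `σ` the sum over `τ` is the determinant of `M` with rows permuted by `σ`, i.e.
`sign σ * det M`, so each of the `n!` permutations `σ` contributes exactly `det M`.
-/

open MeasureTheory Equiv

namespace Matrix

variable {ι R : Type*} [Fintype ι] [DecidableEq ι] [CommRing R]

theorem prod_mul_det_mul_det_eq_sum_sum (g : ι → R) (A B : Matrix ι ι R) :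
    (∏ k, g k) * A.det * B.det =
      ∑ σ : Perm ι, ∑ τ : Perm ι,
        (Perm.sign σ * Perm.sign τ : R) * ∏ k, g k * A k (σ k) * B k (τ k) := by
  rw [mul_assoc, ← det_transpose A, ← det_transpose B, det_apply', det_apply',
    Finset.sum_mul_sum, Finset.mul_sum]
  refine Finset.sum_congr rfl fun σ _ => ?_
  rw [Finset.mul_sum]
  refine Finset.sum_congr rfl fun τ _ => ?_
  simp only [transpose_apply, Finset.prod_mul_distrib]
  ring

theorem sum_sign_mul_prod_comp_eq_sign_mul_det (σ : Perm ι) (M : Matrix ι ι R) :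
    ∑ τ : Perm ι, (Perm.sign τ : R) * ∏ k, M (σ k) (τ k) = Perm.sign σ * M.det := by
  rw [← det_permute, ← det_transpose, det_apply']
  rfl

theorem sum_sum_sign_mul_prod_eq_factorial_mul_det (M : Matrix ι ι R) :
    ∑ σ : Perm ι, ∑ τ : Perm ι, (Perm.sign σ * Perm.sign τ : R) * ∏ k, M (σ k) (τ k) =
      (Fintype.card ι).factorial * M.det := by
  have sum_over_τ : ∀ σ : Perm ι,
      ∑ τ : Perm ι, (Perm.sign σ * Perm.sign τ : R) * ∏ k, M (σ k) (τ k) = M.det := by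
    intro σ
    simp_rw [mul_assoc, ← Finset.mul_sum]
    rw [sum_sign_mul_prod_comp_eq_sign_mul_det, ← mul_assoc, ← Int.cast_mul, ← Units.val_mul,
      Int.units_mul_self, Units.val_one, Int.cast_one, one_mul]
  simp_rw [sum_over_τ, Finset.sum_const, Finset.card_univ, Fintype.card_perm, nsmul_eq_mul]

end Matrix

theorem integral_prod_mul_det_mul_det {𝕜 ι X : Type*} [RCLike 𝕜] [Fintype ι] [DecidableEq ι]
    [MeasurableSpace X] (μ : Measure X) [SigmaFinite μ] (f : X → 𝕜) (u v : ι → X → 𝕜)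
    (hint : ∀ l m, Integrable (fun x => f x * u l x * v m x) μ) :
    ∫ x : ι → X, (∏ k, f (x k)) * (Matrix.of fun k l => u l (x k)).det *
        (Matrix.of fun k l => v l (x k)).det ∂(Measure.pi fun _ => μ) =
      (Fintype.card ι).factorial * (Matrix.of fun l m => ∫ x, f x * u l x * v m x ∂μ).det := by
  have hprod : ∀ σ τ : Perm ι, Integrable (fun x : ι → X => ∏ k, f (x k) * u (σ k) (x k) *
      v (τ k) (x k)) (Measure.pi fun _ => μ) := fun σ τ =>
    Integrable.fintype_prod (f := fun k y => f y * u (σ k) y * v (τ k) y) fun k => hint _ _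
  simp_rw [Matrix.prod_mul_det_mul_det_eq_sum_sum, Matrix.of_apply]
  rw [integral_finsetSum _ fun σ _ => integrable_finsetSum _ fun τ _ => (hprod σ τ).const_mul _,
    ← Matrix.sum_sum_sign_mul_prod_eq_factorial_mul_det]
  refine Finset.sum_congr rfl fun σ _ => ?_
  rw [integral_finsetSum _ fun τ _ => (hprod σ τ).const_mul _]
  refine Finset.sum_congr rfl fun τ _ => ?_
  rw [integral_const_mul, integral_fintype_prod_eq_prod
    (fun k y => f y * u (σ k) y * v (τ k) y)]
  rfl

theorem stmt_13_general {X : Type*} [MeasurableSpace X] (μ : Measure X) [SigmaFinite μ]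
    (n : ℕ) (f : X → ℂ) (u v : Fin n → X → ℂ)
    (hint : ∀ l m, Integrable (fun x => f x * u l x * v m x) μ) :
    (∫ x : Fin n → X,
        (∏ k, f (x k)) * (Matrix.of fun k l => u l (x k)).det *
          (Matrix.of fun k l => v l (x k)).det ∂(Measure.pi fun _ => μ))
      = (n.factorial : ℂ) *
          (Matrix.of fun l m => ∫ x, f x * u l x * v m x ∂μ).det := by
  simpa using integral_prod_mul_det_mul_det μ f u v hint

/-- Andréief-type determinant integration lemma: for a σ-finite measure `μ` on `X`,
`n ≥ 1`, and measurable `f, u₁,…,uₙ, v₁,…,vₙ : X → ℂ` with the stated integrability,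
`∫_{Xⁿ} ∏_k f(x_k) · det[u_l(x_k)] · det[v_l(x_k)] dμⁿ
  = n! · det[∫_X f·u_l·v_m dμ]`. -/
theorem stmt_13 {X : Type*} [MeasurableSpace X] (μ : Measure X) [SigmaFinite μ]
    (n : ℕ) (hn : 1 ≤ n) (f : X → ℂ) (u v : Fin n → X → ℂ)
    (hf : Measurable f) (hu : ∀ l, Measurable (u l)) (hv : ∀ l, Measurable (v l))
    (hint : ∀ l m, Integrable (fun x => f x * u l x * v m x) μ)
    (hint2 : Integrable
      (fun x : Fin n → X =>
        (∏ k, f (x k)) * (Matrix.of fun k l => u l (x k)).det *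
          (Matrix.of fun k l => v l (x k)).det)
      (Measure.pi fun _ => μ)) :
    (∫ x : Fin n → X,
        (∏ k, f (x k)) * (Matrix.of fun k l => u l (x k)).det *
          (Matrix.of fun k l => v l (x k)).det ∂(Measure.pi fun _ => μ))
      = (n.factorial : ℂ) *
          (Matrix.of fun l m => ∫ x, f x * u l x * v m x ∂μ).det :=
  stmt_13_general μ n f u v hint
end

section
/- Let F be a field, n ≥ 2, and let x₁,…,xₙ, b₁,…,b_{n−1} ∈ F be such that x_k + b_α ≠ 0 for all k and α. Let M be the n×n matrix whose first row is (1,1,…,1) and whose (α+1)-st row (for 1 ≤ α ≤ n−1) has entries M_{α+1,k} = 1/(x_k + b_α). Then det M = [∏_{1≤k<l≤n}(x_k − x_l) · ∏_{1≤α<β≤n−1}(b_α − b_β)] / ∏_{1≤k≤n, 1≤α≤n−1}(x_k + b_α). -/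
/-!
Subtracting the first row from the others, the entries become
`(a + c)⁻¹ - (a' + c)⁻¹ = (a' - a) (a' + c)⁻¹ (a + c)⁻¹`, and pulling out these row and column
factors turns the Cauchy matrix of size `n + 1` into the ones-row matrix of size `n + 1` (with the
two families of parameters exchanged). Doing the same to the transpose of the ones-row matrix
leaves `(1, 0, …, 0)` as its first column, and the Laplace expansion along it gives the Cauchy
matrix of size `n`. Induction on `n` proves both determinant formulas at once.
-/

open Finset

namespace Matrix

variable {R : Type*} [CommRing R]

theorem det_of_mul_mul {ι : Type*} [Fintype ι] [DecidableEq ι] (r s : ι → R) (A : Matrix ι ι R) :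
    det (of fun i j => r i * s j * A i j) = (∏ i, r i) * (∏ j, s j) * det A := by
  have h : (of fun i j => r i * s j * A i j)
      = of fun i j => r i * (of fun i j => s j * A i j) i j := by
    ext; simp [mul_assoc]
  rw [h, det_mul_column, det_mul_row, mul_assoc]

theorem det_sub_row_zero {n : ℕ} (M : Matrix (Fin (n + 1)) (Fin (n + 1)) R) :
    det (of fun i j => Fin.cases (motive := fun _ => R) (M 0 j) (fun i => M i.succ j - M 0 j) i)
      = det M := by
  symm
  refine det_eq_of_forall_row_eq_smul_add_const (Fin.cases 0 fun _ => 1) 0 rfl fun i j => ?_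
  cases i using Fin.cases <;> simp

end Matrix

theorem inv_add_sub_inv_add {F : Type*} [Field F] {a a' c : F} (h : a + c ≠ 0) (h' : a' + c ≠ 0) :
    (a + c)⁻¹ - (a' + c)⁻¹ = (a' - a) * (a' + c)⁻¹ * (a + c)⁻¹ := by
  field_simp
  ring

section

variable {F : Type*} [Field F] {n : ℕ}

def diffProd {R : Type*} [CommRing R] (u : Fin n → R) : R := ∏ i, ∏ j ∈ Ioi i, (u i - u j)

theorem diffProd_succ {R : Type*} [CommRing R] (u : Fin (n + 1) → R) :
    diffProd u = (∏ j : Fin n, (u 0 - u j.succ)) * diffProd fun i => u i.succ := by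
  rw [diffProd, Fin.prod_univ_succ, Fin.prod_Ioi_zero]
  congr 1
  exact prod_congr rfl fun i _ => Fin.prod_Ioi_succ (fun j => u i.succ - u j) i

def cauchyMatrix (u v : Fin n → F) : Matrix (Fin n) (Fin n) F := .of fun i j => (u i + v j)⁻¹

def onesRowCauchyMatrix (x : Fin (n + 1) → F) (b : Fin n → F) :
    Matrix (Fin (n + 1)) (Fin (n + 1)) F :=
  .of fun i k => Fin.cases (motive := fun _ => F) 1 (fun α => (x k + b α)⁻¹) i

theorem det_onesRowCauchyMatrix_eq_mul_det_cauchyMatrix (x : Fin (n + 1) → F) (b : Fin n → F)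
    (hxb : ∀ k α, x k + b α ≠ 0) :
    (onesRowCauchyMatrix x b).det
      = (∏ k : Fin n, (x 0 - x k.succ)) * (∏ α, (x 0 + b α)⁻¹) *
          (cauchyMatrix (fun k => x k.succ) b).det := by
  rw [← Matrix.det_transpose, ← Matrix.det_sub_row_zero, Matrix.det_succ_column_zero,
    Fin.sum_univ_succ]
  have hreduced : (Matrix.of fun k α => (x k.succ + b α)⁻¹ - (x 0 + b α)⁻¹)
      = .of fun k α =>
          (x 0 - x k.succ) * (x 0 + b α)⁻¹ * cauchyMatrix (fun k => x k.succ) b k α := by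
    ext k α
    exact inv_add_sub_inv_add (hxb _ _) (hxb _ _)
  simp [onesRowCauchyMatrix, Matrix.submatrix, hreduced, Matrix.det_of_mul_mul]

theorem det_cauchyMatrix_succ_eq_mul_det_onesRowCauchyMatrix (u v : Fin (n + 1) → F)
    (huv : ∀ i j, u i + v j ≠ 0) :
    (cauchyMatrix u v).det
      = (∏ i : Fin n, (u 0 - u i.succ)) * (∏ j, (u 0 + v j)⁻¹) *
          (onesRowCauchyMatrix v fun i => u i.succ).det := by
  have hreduced : (Matrix.of fun i j => Fin.cases (motive := fun _ => F) (cauchyMatrix u v 0 j)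
      (fun i => cauchyMatrix u v i.succ j - cauchyMatrix u v 0 j) i)
      = .of fun i j => (Fin.cases 1 fun i => u 0 - u i.succ : Fin (n + 1) → F) i * (u 0 + v j)⁻¹ *
          onesRowCauchyMatrix v (fun i => u i.succ) i j := by
    ext i j
    cases i using Fin.cases with
    | zero => simp [cauchyMatrix, onesRowCauchyMatrix]
    | succ i =>
      simp only [cauchyMatrix, onesRowCauchyMatrix, Matrix.of_apply, Fin.cases_succ]
      rw [inv_add_sub_inv_add (huv _ _) (huv _ _), add_comm (v j)]
  rw [← Matrix.det_sub_row_zero, hreduced, Matrix.det_of_mul_mul, Fin.prod_univ_succ]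
  simp

theorem det_onesRowCauchyMatrix_of_det_cauchyMatrix (x : Fin (n + 1) → F) (b : Fin n → F)
    (hxb : ∀ k α, x k + b α ≠ 0)
    (hc : (cauchyMatrix (fun k => x k.succ) b).det
      = diffProd (fun k => x k.succ) * diffProd b / ∏ k : Fin n, ∏ α, (x k.succ + b α)) :
    (onesRowCauchyMatrix x b).det = diffProd x * diffProd b / ∏ k, ∏ α, (x k + b α) := by
  rw [det_onesRowCauchyMatrix_eq_mul_det_cauchyMatrix x b hxb, hc, diffProd_succ x,
    Fin.prod_univ_succ fun k => ∏ α, (x k + b α),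
    div_eq_mul_inv, div_eq_mul_inv, mul_inv, prod_inv_distrib]
  ring

theorem det_cauchyMatrix (u v : Fin n → F) (huv : ∀ i j, u i + v j ≠ 0) :
    (cauchyMatrix u v).det = diffProd u * diffProd v / ∏ i, ∏ j, (u i + v j) := by
  induction n with
  | zero => simp [diffProd]
  | succ n ih =>
    have hvariant := det_onesRowCauchyMatrix_of_det_cauchyMatrix v (fun i => u i.succ)
      (fun j i => add_comm (v j) _ ▸ huv _ _) (ih _ _ fun i j => add_comm (u _) _ ▸ huv _ _)
    rw [det_cauchyMatrix_succ_eq_mul_det_onesRowCauchyMatrix u v huv, hvariant,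
      diffProd_succ u,
      Fin.prod_univ_succ fun i => ∏ j, (u i + v j), prod_comm (s := univ (α := Fin (n + 1))),
      div_eq_mul_inv, div_eq_mul_inv, mul_inv, prod_inv_distrib]
    simp only [add_comm (v _)]
    ring

theorem det_onesRowCauchyMatrix (x : Fin (n + 1) → F) (b : Fin n → F)
    (hxb : ∀ k α, x k + b α ≠ 0) :
    (onesRowCauchyMatrix x b).det = diffProd x * diffProd b / ∏ k, ∏ α, (x k + b α) :=
  det_onesRowCauchyMatrix_of_det_cauchyMatrix x b hxb (det_cauchyMatrix _ _ fun _ _ => hxb _ _)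

end

theorem stmt_14_general {F : Type*} [Field F] (n : ℕ)
    (x : Fin (n + 1) → F) (b : Fin n → F)
    (hxb : ∀ k α, x k + b α ≠ 0) :
    (Matrix.of fun i k : Fin (n + 1) =>
        Fin.cases (motive := fun _ => F) 1 (fun α => (x k + b α)⁻¹) i).det
      = (∏ k : Fin (n + 1), ∏ l ∈ Ioi k, (x k - x l)) *
          (∏ α : Fin n, ∏ β ∈ Ioi α, (b α - b β)) /
        ∏ k : Fin (n + 1), ∏ α : Fin n, (x k + b α) :=
  det_onesRowCauchyMatrix x b hxb

/-- Variant of the Cauchy determinant in which one row is replaced by a row of ones: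
for an `(n+1)×(n+1)` matrix (`n ≥ 1`) whose first row is `(1,…,1)` and whose row
indexed by `α` has entries `1/(x_k + b_α)`,
`det M = ∏_{k<l}(x_k − x_l) · ∏_{α<β}(b_α − b_β) / ∏_{k,α}(x_k + b_α)`. -/
theorem stmt_14 {F : Type*} [Field F] (n : ℕ) (hn : 1 ≤ n)
    (x : Fin (n + 1) → F) (b : Fin n → F)
    (hxb : ∀ k α, x k + b α ≠ 0) :
    (Matrix.of fun i k : Fin (n + 1) =>
        Fin.cases (motive := fun _ => F) 1 (fun α => (x k + b α)⁻¹) i).det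
      = (∏ k : Fin (n + 1), ∏ l ∈ Ioi k, (x k - x l)) *
          (∏ α : Fin n, ∏ β ∈ Ioi α, (b α - b β)) /
        ∏ k : Fin (n + 1), ∏ α : Fin n, (x k + b α) :=
  stmt_14_general n x b hxb
end

section
/- Let F be a field, n ≥ 1, and let x₁,…,xₙ, a₁,…,a_{n−1}, b₁,…,b_{n−1} ∈ F be such that x_k + b_β ≠ 0 for all k and β. Let M be the n×n matrix with rows indexed by α = 0,1,…,n−1 and columns by k = 1,…,n, whose entries are M_{α,k} = ∏_{m=1}^{α}(x_k + a_m) / ∏_{m=1}^{α}(x_k + b_m) (so the row α = 0 consists of ones). Then det M = [∏_{1≤k<l≤n}(x_k − x_l) · ∏_{1≤α≤β≤n−1}(a_α − b_β)] / ∏_{1≤k≤n, 1≤β≤n−1}(x_k + b_β). (Krattenthaler-type determinant evaluation.) -/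
/-!
Write `P_α = ∏_{m<α} (X + a_m) · ∏_{m≥α} (X + b_m)`, a monic polynomial of degree `n`. Clearing
the denominators `∏_β (x_k + b_β)` column by column turns the matrix into `(P_α(x_k))`, which
factors as (coefficient matrix of the `P_α`) × (transposed Vandermonde matrix of the `x_k`).
For the coefficient matrix, `P_{α+1} - P_α = (a_α - b_α) · P'_α`, where `P'_α` is the polynomial
of the same shape and degree `n - 1` built from `a_0, …, a_{n-2}` and `b_1, …, b_{n-1}`; so after
subtracting consecutive rows the last column is the unit vector `e_0`, and expanding along it gives
a recursion whose solution is `∏_{α≤β} (b_β - a_α)`.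
-/

open Finset Polynomial Matrix

theorem Fin.prod_Ioi_eq_prod_Ici_succ {M : Type*} [CommMonoid M] {n : ℕ}
    (f : Fin (n + 1) → Fin (n + 1) → M) :
    ∏ i, ∏ j ∈ Ioi i, f i j = ∏ i : Fin n, ∏ j ∈ Ici i, f i.castSucc j.succ := by
  rw [Fin.prod_univ_castSucc, show Ioi (Fin.last n) = ∅ by simp [Fin.top_eq_last], prod_empty,
    mul_one]
  refine prod_congr rfl fun i _ => ?_
  have hIoi : Ioi i.castSucc = (Ici i).map (Fin.succEmb n) := by
    ext j
    simp [Fin.castSucc_lt_iff_succ_le]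
  rw [hIoi, prod_map]
  rfl

section

variable {R : Type*} [CommRing R]

def coeffMatrix {n : ℕ} (p : Fin n → R[X]) : Matrix (Fin n) (Fin n) R :=
  .of fun i j => (p i).coeff j

theorem of_eval_eq_coeffMatrix_mul_vandermonde_transpose {n : ℕ} (p : Fin n → R[X])
    (hp : ∀ i, (p i).natDegree < n) (v : Fin n → R) :
    Matrix.of (fun i j => (p i).eval (v j)) = coeffMatrix p * (vandermonde v)ᵀ := by
  ext i j
  rw [of_apply, eval_eq_sum_range' (hp i), ← Fin.sum_univ_eq_sum_range]
  rfl

theorem det_coeffMatrix_of_succ_eq_add {n : ℕ} (p : Fin (n + 2) → R[X]) (q : Fin (n + 1) → R[X])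
    (c : Fin (n + 1) → R) (hp : (p 0).coeff (n + 1) = 1) (hq : ∀ i, (q i).natDegree < n + 1)
    (hpq : ∀ i, p i.succ = p i.castSucc + C (c i) * q i) :
    (coeffMatrix p).det = (-1) ^ (n + 1) * (∏ i, c i) * (coeffMatrix q).det := by
  set B : Matrix (Fin (n + 2)) (Fin (n + 2)) R :=
    .of fun i j => Fin.cases ((p 0).coeff j) (fun i => c i * (q i).coeff j) i with hB
  have hdet : (coeffMatrix p).det = B.det :=
    det_eq_of_forall_row_eq_smul_add_pred (fun _ => 1) (fun j => rfl) fun i j => by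
      simp [coeffMatrix, hB, hpq i, add_comm]
  have hB_last : ∀ i, B i (Fin.last _) = if i = 0 then 1 else 0 := by
    intro i
    cases i using Fin.cases with
    | zero => simpa [hB] using hp
    | succ i => simp [hB, coeff_eq_zero_of_natDegree_lt (hq i)]
  have hB_minor : B.submatrix (Fin.succAbove 0) (Fin.last _).succAbove
      = .of fun i j => c i * coeffMatrix q i j := by
    ext i j
    simp [hB, coeffMatrix]
  rw [hdet, det_succ_column B (Fin.last _),
    sum_eq_single 0 (fun i _ hi => by simp [hB_last, hi]) (by simp),
    hB_last, if_pos rfl, hB_minor, det_mul_column]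
  simp [mul_assoc]

noncomputable def krattenthalerPoly {n : ℕ} (a b : Fin n → R) (α : ℕ) : R[X] :=
  ∏ m : Fin n, (X + C (if (m : ℕ) < α then a m else b m))

theorem krattenthalerPoly_natDegree_lt {n : ℕ} (a b : Fin n → R) (α : ℕ) :
    (krattenthalerPoly a b α).natDegree < n + 1 := by
  refine Nat.lt_succ_of_le ((natDegree_prod_le _ _).trans ?_)
  simpa using mul_le_of_le_one_right (Nat.zero_le n) natDegree_X_le

theorem krattenthalerPoly_coeff_n_eq_one {n : ℕ} (a b : Fin n → R) (α : ℕ) :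
    (krattenthalerPoly a b α).coeff n = 1 := by
  nontriviality R
  have hmonic : (krattenthalerPoly a b α).Monic :=
    monic_prod_of_monic _ _ fun m _ => monic_X_add_C _
  have hdeg : (krattenthalerPoly a b α).natDegree = n := by
    rw [krattenthalerPoly, natDegree_prod_of_monic _ _ fun m _ => monic_X_add_C _]
    simp
  simpa [hdeg] using hmonic.coeff_natDegree

theorem krattenthalerPoly_eval {n : ℕ} (a b : Fin n → R) (α : ℕ) (x : R) :
    (krattenthalerPoly a b α).eval x
      = (∏ m ∈ univ.filter (fun m : Fin n => (m : ℕ) < α), (x + a m))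
        * ∏ m ∈ univ.filter (fun m : Fin n => ¬ (m : ℕ) < α), (x + b m) := by
  simp only [krattenthalerPoly, eval_prod, eval_add, eval_X, eval_C, apply_ite (x + ·)]
  exact prod_ite ..

theorem krattenthalerPoly_add_one {n : ℕ} (a b : Fin (n + 1) → R) (α : Fin (n + 1)) :
    krattenthalerPoly a b (α + 1) = krattenthalerPoly a b α
      + C (a α - b α) * krattenthalerPoly (a ∘ Fin.castSucc) (b ∘ Fin.succ) α := by
  have split_off_α : ∀ β, (α : ℕ) ≤ β → β ≤ α + 1 → krattenthalerPoly a b β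
      = (X + C (if (α : ℕ) < β then a α else b α))
        * krattenthalerPoly (a ∘ Fin.castSucc) (b ∘ Fin.succ) α := by
    intro β hαβ hβα
    rw [krattenthalerPoly, Fin.prod_univ_succAbove _ α]
    congr 1
    refine prod_congr rfl fun m _ => ?_
    congr 2
    rcases Fin.castSucc_lt_or_lt_succ α m with h | h
    · rw [Fin.succAbove_of_castSucc_lt _ _ h]
      have hm : (m : ℕ) < α := h
      simp [hm, hm.trans_le hαβ]
    · rw [Fin.succAbove_of_lt_succ _ _ h]
      rw [Fin.lt_def, Fin.val_succ] at h
      have hm : ¬ (m : ℕ) < α := by omega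
      have hm' : ¬ (m : ℕ) + 1 < β := by omega
      simp [hm, hm']
  rw [split_off_α (α + 1) (by omega) le_rfl, split_off_α α le_rfl (by omega), if_pos (by omega),
    if_neg (by omega), C_sub]
  ring

theorem det_coeffMatrix_krattenthalerPoly : ∀ {n : ℕ} (a b : Fin n → R),
    (coeffMatrix fun α : Fin (n + 1) => krattenthalerPoly a b α).det
      = ∏ α, ∏ β ∈ Ici α, (b β - a α)
  | 0, a, b => by simp [coeffMatrix, krattenthalerPoly]
  | n + 1, a, b => by
    rw [det_coeffMatrix_of_succ_eq_add _ _ (fun i => a i - b i)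
      (krattenthalerPoly_coeff_n_eq_one ..) (fun i => krattenthalerPoly_natDegree_lt ..)
      (fun i => krattenthalerPoly_add_one a b i), det_coeffMatrix_krattenthalerPoly]
    have hdiag : ∏ α, ∏ β ∈ Ici α, (b β - a α)
        = (∏ α, (b α - a α)) * ∏ α, ∏ β ∈ Ioi α, (b β - a α) := by
      rw [← prod_mul_distrib]
      exact prod_congr rfl fun α _ => by rw [Ici_eq_cons_Ioi, prod_cons]
    have hsign : ∏ i, (b i - a i) = (-1) ^ (n + 1) * ∏ i, (a i - b i) := by
      simp only [← neg_sub (a _), prod_neg, card_univ, Fintype.card_fin]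
    rw [hdiag, hsign, Fin.prod_Ioi_eq_prod_Ici_succ (fun α β => b β - a α)]
    rfl

theorem det_eval_krattenthalerPoly {n : ℕ} (a b : Fin n → R) (x : Fin (n + 1) → R) :
    (Matrix.of fun α k : Fin (n + 1) => (krattenthalerPoly a b α).eval (x k)).det
      = (∏ α, ∏ β ∈ Ici α, (b β - a α)) * ∏ i, ∏ j ∈ Ioi i, (x j - x i) := by
  rw [of_eval_eq_coeffMatrix_mul_vandermonde_transpose _
      (fun α => krattenthalerPoly_natDegree_lt a b α), det_mul, det_transpose, det_vandermonde,
    det_coeffMatrix_krattenthalerPoly]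

end

/-- Krattenthaler-type determinant evaluation: for the `(n+1)×(n+1)` matrix with rows
indexed by `α = 0,…,n` and entries
`M_{α,k} = ∏_{m<α}(x_k + a_m) / ∏_{m<α}(x_k + b_m)` (row `α = 0` consists of ones),
`det M = ∏_{k<l}(x_k − x_l) · ∏_{α≤β}(a_α − b_β) / ∏_{k,β}(x_k + b_β)`. -/
theorem stmt_15 {F : Type*} [Field F] (n : ℕ)
    (x : Fin (n + 1) → F) (a b : Fin n → F)
    (hxb : ∀ k β, x k + b β ≠ 0) :
    (Matrix.of fun α k : Fin (n + 1) =>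
        (∏ m ∈ univ.filter (fun m : Fin n => (m : ℕ) < (α : ℕ)), (x k + a m)) /
        (∏ m ∈ univ.filter (fun m : Fin n => (m : ℕ) < (α : ℕ)), (x k + b m))).det
      = (∏ k : Fin (n + 1), ∏ l ∈ Ioi k, (x k - x l)) *
          (∏ α : Fin n, ∏ β ∈ Ici α, (a α - b β)) /
        ∏ k : Fin (n + 1), ∏ β : Fin n, (x k + b β) := by
  set D : Fin (n + 1) → F := fun k => ∏ β, (x k + b β)
  have hentry : ∀ α k : Fin (n + 1),
      (∏ m ∈ univ.filter (fun m : Fin n => (m : ℕ) < (α : ℕ)), (x k + a m)) /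
        (∏ m ∈ univ.filter (fun m : Fin n => (m : ℕ) < (α : ℕ)), (x k + b m))
      = (D k)⁻¹ * (Matrix.of fun α k : Fin (n + 1) => (krattenthalerPoly a b α).eval (x k)) α k := by
    intro α k
    have hne : ∀ s : Finset (Fin n), ∏ m ∈ s, (x k + b m) ≠ 0 :=
      fun s => prod_ne_zero_iff.mpr fun m _ => hxb k m
    rw [of_apply, krattenthalerPoly_eval, show D k = _ from
      (prod_filter_mul_prod_filter_not univ (fun m : Fin n => (m : ℕ) < α) _).symm]
    field_simp [hne]
  have hsign : (∏ α, ∏ β ∈ Ici α, (b β - a α)) * ∏ i, ∏ j ∈ Ioi i, (x j - x i)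
      = (∏ k, ∏ l ∈ Ioi k, (x k - x l)) * ∏ α, ∏ β ∈ Ici α, (a α - b β) := by
    -- reindexed over the pairs `α ≤ β`, each factor pair changes sign twice
    simp only [Fin.prod_Ioi_eq_prod_Ici_succ, ← prod_mul_distrib]
    exact prod_congr rfl fun α _ => prod_congr rfl fun β _ => by ring
  simp_rw [hentry]
  rw [det_mul_row, det_eval_krattenthalerPoly, hsign, prod_inv_distrib, div_eq_inv_mul]
end

section
/- Let n ≥ 1 and let σ, τ be real numbers, neither of which is an integer. Then the following are equivalent: (i) for every integer m, Γ(−σ + m − n + 1) · Γ(τ + m + 1) > 0 (equivalently, the ratio Γ(−σ+m−n+1)/Γ(τ+m+1) is positive for every integer m); (ii) the integer parts of −σ−n and of τ are equal, i.e. ⌊−σ−n⌋ = ⌊τ⌋. (This is the computational core of the theorem that the Stein–Sahi Hermitian form ⟨·,·⟩_{σ|τ} on C^∞(U(n)) is positive definite, up to sign, exactly when ⌊−σ−n⌋ = ⌊τ⌋.) -/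
/-- A non-integer real is not `-m` for any natural `m`, so `Γ x ≠ 0`. -/
lemma gamma_ne_zero_of_nonint {x : ℝ} (hx : ∀ m : ℤ, x ≠ m) : Real.Gamma x ≠ 0 := by
  apply Real.Gamma_ne_zero
  intro m
  simpa using hx (-m)

/-- Sign of the Gamma function at non-integer points, bounded below version. -/
lemma gamma_pos_iff_aux (k : ℕ) : ∀ x : ℝ, (∀ m : ℤ, x ≠ m) → -(k : ℝ) < x →
    (0 < Real.Gamma x ↔ Even (⌊x⌋ ⊓ 0)) := by
  induction k with
  | zero =>
    intro x hx hlt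
    push_cast at hlt
    have hpos : 0 < x := by linarith
    have h1 : (0:ℤ) ≤ ⌊x⌋ := Int.floor_nonneg.2 hpos.le
    simp [Real.Gamma_pos_of_pos hpos, inf_eq_right.2 h1]
  | succ k ih =>
    intro x hx hlt
    by_cases hk : -(k : ℝ) < x
    · exact ih x hx hk
    push_neg at hk
    have hne : x ≠ -(k : ℝ) := by simpa using hx (-(k:ℤ))
    have hk' : x < -(k : ℝ) := lt_of_le_of_ne hk hne
    have hxneg : x < 0 := by
      have : (0:ℝ) ≤ (k:ℝ) := Nat.cast_nonneg k
      linarith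
    have hx1 : ∀ m : ℤ, x + 1 ≠ m := by
      intro m h
      exact hx (m - 1) (by push_cast; linarith)
    have hGx : Real.Gamma x ≠ 0 := gamma_ne_zero_of_nonint hx
    have hG1 : Real.Gamma (x + 1) = x * Real.Gamma x :=
      Real.Gamma_add_one (by intro h; exact hx 0 (by simpa using h))
    have hfloor : ⌊x⌋ = -(k : ℤ) - 1 := by
      apply Int.floor_eq_iff.2
      constructor
      · push_cast; push_cast at hlt; linarith
      · push_cast; linarith
    have hfloor1 : ⌊x + 1⌋ = -(k : ℤ) := by
      rw [show (1:ℝ) = ((1:ℤ):ℝ) by norm_num, Int.floor_add_intCast, hfloor]; ring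
    have ih1 : 0 < Real.Gamma (x + 1) ↔ Even (⌊x + 1⌋ ⊓ 0) := by
      apply ih (x + 1) hx1
      push_cast at hlt ⊢
      linarith
    have key : 0 < Real.Gamma x ↔ ¬ 0 < Real.Gamma (x + 1) := by
      rw [hG1]
      constructor
      · intro h; push_neg; nlinarith
      · intro h
        push_neg at h
        rcases hGx.lt_or_gt with h' | h'
        · exfalso
          have : 0 < x * Real.Gamma x := mul_pos_of_neg_of_neg hxneg h'
          linarith
        · exact h'
    rw [key, ih1, hfloor, hfloor1]
    have h1 : (-(k:ℤ) - 1) ⊓ 0 = -(k:ℤ) - 1 := inf_eq_left.2 (by omega)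
    have h2 : (-(k:ℤ)) ⊓ 0 = -(k:ℤ) := inf_eq_left.2 (by omega)
    rw [h1, h2]
    simp only [Int.even_iff]
    omega

/-- Sign of the Gamma function at non-integer points. -/
lemma gamma_pos_iff {x : ℝ} (hx : ∀ m : ℤ, x ≠ m) :
    0 < Real.Gamma x ↔ Even (⌊x⌋ ⊓ 0) := by
  obtain ⟨k, hk⟩ := exists_nat_gt (-x)
  exact gamma_pos_iff_aux k x hx (by linarith)

/-- Let `n ≥ 1` and let `σ, τ` be non-integer reals. Then
`Γ(−σ+m−n+1)·Γ(τ+m+1) > 0` for every integer `m` iff `⌊−σ−n⌋ = ⌊τ⌋`.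
This is the computational core of the positivity criterion for the Stein–Sahi
Hermitian form `⟨·,·⟩_{σ|τ}` on `C^∞(U(n))`. -/
theorem stmt_18 (n : ℕ) (hn : 1 ≤ n) (σ τ : ℝ)
    (hσ : ∀ m : ℤ, σ ≠ m) (hτ : ∀ m : ℤ, τ ≠ m) :
    (∀ m : ℤ, 0 < Real.Gamma (-σ + m - n + 1) * Real.Gamma (τ + m + 1)) ↔
      ⌊-σ - n⌋ = ⌊τ⌋ := by
  have hu : ∀ m : ℤ, ∀ l : ℤ, (-σ + m - n + 1 : ℝ) ≠ l := by
    intro m l h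
    exact hσ (-(l - m + n - 1)) (by push_cast; linarith)
  have hv : ∀ m : ℤ, ∀ l : ℤ, (τ + m + 1 : ℝ) ≠ l := by
    intro m l h
    exact hτ (l - m - 1) (by push_cast; linarith)
  have hfu : ∀ m : ℤ, ⌊(-σ + m - n + 1 : ℝ)⌋ = ⌊-σ - n⌋ + (m + 1) := by
    intro m
    have : (-σ + m - n + 1 : ℝ) = (-σ - n) + ((m + 1 : ℤ) : ℝ) := by push_cast; ring
    rw [this, Int.floor_add_intCast]
  have hfv : ∀ m : ℤ, ⌊(τ + m + 1 : ℝ)⌋ = ⌊τ⌋ + (m + 1) := by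
    intro m
    have : (τ + m + 1 : ℝ) = τ + ((m + 1 : ℤ) : ℝ) := by push_cast; ring
    rw [this, Int.floor_add_intCast]
  set a := ⌊-σ - n⌋ with ha
  set b := ⌊τ⌋ with hb
  have key : ∀ m : ℤ,
      (0 < Real.Gamma (-σ + m - n + 1) * Real.Gamma (τ + m + 1)) ↔
      (Even ((a + (m + 1)) ⊓ 0) ↔ Even ((b + (m + 1)) ⊓ 0)) := by
    intro m
    have h1 := gamma_pos_iff (hu m)
    have h2 := gamma_pos_iff (hv m)
    have hn1 : Real.Gamma (-σ + m - n + 1) ≠ 0 := gamma_ne_zero_of_nonint (hu m)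
    have hn2 : Real.Gamma (τ + m + 1) ≠ 0 := gamma_ne_zero_of_nonint (hv m)
    rw [mul_pos_iff, ← hfu m, ← hfv m, ← h1, ← h2]
    constructor
    · rintro (⟨p1, p2⟩ | ⟨q1, q2⟩)
      · exact ⟨fun _ => p2, fun _ => p1⟩
      · constructor <;> intro h <;> linarith
    · intro h
      rcases hn1.lt_or_gt with h' | h'
      · right
        refine ⟨h', ?_⟩
        rcases hn2.lt_or_gt with h'' | h''
        · exact h''
        · exact absurd (h.2 h'') (by linarith)
      · left
        exact ⟨h', h.1 h'⟩
  constructor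
  · intro H
    by_contra hab
    rcases lt_or_gt_of_ne hab with hlt | hlt
    · have := (key (-a - 2)).1 (H (-a - 2))
      have e1 : (a + (-a - 2 + 1)) ⊓ 0 = -1 := by omega
      have e2 : (b + (-a - 2 + 1)) ⊓ 0 = 0 := by omega
      rw [e1, e2] at this
      have : Even (-1 : ℤ) := this.2 (Even.zero)
      simp [Int.even_iff] at this
    · have := (key (-b - 2)).1 (H (-b - 2))
      have e1 : (a + (-b - 2 + 1)) ⊓ 0 = 0 := by omega
      have e2 : (b + (-b - 2 + 1)) ⊓ 0 = -1 := by omega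
      rw [e1, e2] at this
      have : Even (-1 : ℤ) := this.1 (Even.zero)
      simp [Int.even_iff] at this
  · intro hab m
    rw [key m, hab]
end
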